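/- arXiv:2410.00143 — 8 statements merged into one kernel-verified Lean document; each statement's English description precedes it below -/
import Mathlib

section
/- If A is a subset of Z/pZ for a prime p with |A| ≥ 3, then the restricted sumset A +̂ A = {a₁+a₂ : a₁,a₂ ∈ A, a₁ ≠ a₂} has cardinality at least min(2|A|-3, p). -/
open Finset

/-- The restricted sumset `A +̂ B = {a + b : a ∈ A, b ∈ B, a ≠ b}`. -/
def hadd {G : Type*} [AddCommGroup G] [DecidableEq G] (A B : Finset G) : Finset G :=
  ((A ×ˢ B).filter fun x => x.1 ≠ x.2).image fun x => x.1 + x.2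

section auxiliary

open Polynomial

variable {F : Type*} [Field F] [DecidableEq F]


/-- Lagrange weight. -/
noncomputable def lw (S : Finset F) (s : F) : F := ∏ t ∈ S.erase s, (s - t)⁻¹

lemma coeff_basis (S : Finset F) {i : F} (hi : i ∈ S) :
    (Lagrange.basis S id i).coeff (S.card - 1) = lw S i := by
  unfold Lagrange.basis Lagrange.basisDivisor
  rw [Finset.prod_mul_distrib, ← map_prod]
  rw [Polynomial.coeff_C_mul]
  have : ∏ j ∈ S.erase i, (X - Polynomial.C (id j)) = Lagrange.nodal (S.erase i) id := by
    rw [Lagrange.nodal_eq]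
  rw [this]
  have hd : (Lagrange.nodal (S.erase i) id).natDegree = S.card - 1 := by
    rw [Lagrange.natDegree_nodal, card_erase_of_mem hi]
  have := (Lagrange.nodal_monic (s := S.erase i) (v := (id : F → F))).coeff_natDegree
  rw [hd] at this
  rw [this, mul_one, lw]
  rfl

lemma K1 (S : Finset F) (a : ℕ) (ha : a < S.card) :
    ∑ s ∈ S, s ^ a * lw S s = if a + 1 = S.card then 1 else 0 := by
  have hinj : Set.InjOn (id : F → F) S := fun x _ y _ h => h
  have hdeg : ((X : F[X]) ^ a).degree < S.card := by
    rw [degree_X_pow]; exact_mod_cast ha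
  have hint := Lagrange.eq_interpolate hinj hdeg
  have := congrArg (fun q => q.coeff (S.card - 1)) hint
  simp only [Lagrange.interpolate_apply, Polynomial.finset_sum_coeff,
    Polynomial.coeff_C_mul, coeff_X_pow] at this
  rw [Finset.sum_congr rfl (fun s hs => by
    rw [coeff_basis S hs, eval_pow, eval_X, id]) ] at this
  rw [← this]
  by_cases h : a + 1 = S.card
  · rw [if_pos h, if_pos (by omega)]
  · rw [if_neg h, if_neg (by omega)]

lemma K2 (S T : Finset F) (a b : ℕ)
    (hab : a + b + 2 ≤ S.card + T.card) (hS : S.Nonempty) (hT : T.Nonempty) :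
    ∑ s ∈ S, ∑ t ∈ T, s ^ a * t ^ b * (lw S s * lw T t) =
      if a + 1 = S.card ∧ b + 1 = T.card then 1 else 0 := by
  have hfac : ∑ s ∈ S, ∑ t ∈ T, s ^ a * t ^ b * (lw S s * lw T t) =
      (∑ s ∈ S, s ^ a * lw S s) * (∑ t ∈ T, t ^ b * lw T t) := by
    rw [Finset.sum_mul_sum]
    exact Finset.sum_congr rfl fun s _ => Finset.sum_congr rfl fun t _ => by ring
  rw [hfac]
  have hS1 : 1 ≤ S.card := hS.card_pos
  have hT1 : 1 ≤ T.card := hT.card_pos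
  by_cases hA : a < S.card
  · by_cases hB : b < T.card
    · rw [K1 S a hA, K1 T b hB]
      split_ifs with h1 h2 h3 h4 <;> simp_all
    · rw [K1 S a hA]
      have hb2 : b + 2 ≤ T.card ∨ ¬ (b < T.card) := Or.inr hB
      have ha1 : a + 1 < S.card := by omega
      rw [if_neg (by omega), zero_mul, if_neg (by omega)]
  · have hb : b + 1 < T.card := by omega
    rw [K1 T b (by omega), if_neg (by omega), mul_zero, if_neg (by omega)]

lemma binom_ne {p : ℕ} (hp : p.Prime) {k : ℕ} (hk : 3 ≤ k) (hkp : 2 * k - 3 ≤ p) :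
    (((2 * k - 4).choose (k - 2) : ZMod p)) ≠ ((2 * k - 4).choose (k - 1) : ZMod p) := by
  haveI : Fact p.Prime := ⟨hp⟩
  set a := k - 2 with ha
  have h2a : 2 * k - 4 = 2 * a := by omega
  have hk1 : k - 1 = a + 1 := by omega
  have ha1 : 1 ≤ a := by omega
  have h2ap : 2 * a < p := by omega
  -- factorials below p are nonzero in ZMod p
  have hfac : ∀ n : ℕ, n < p → ((n.factorial : ZMod p) ≠ 0) := by
    intro n hn h0
    rw [ZMod.natCast_eq_zero_iff] at h0
    exact absurd (hp.dvd_factorial.mp h0) (by omega)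
  intro heq
  rw [h2a, hk1] at heq
  have e1 : ((2 * a).choose a : ZMod p) * (a.factorial : ZMod p) * (a.factorial : ZMod p)
      = ((2 * a).factorial : ZMod p) := by
    have := Nat.choose_mul_factorial_mul_factorial (show a ≤ 2 * a by omega)
    have h' : 2 * a - a = a := by omega
    rw [h'] at this
    exact_mod_cast congrArg (fun n : ℕ => (n : ZMod p)) this
  have e2 : ((2 * a).choose (a + 1) : ZMod p) * ((a + 1).factorial : ZMod p)
        * ((a - 1).factorial : ZMod p) = ((2 * a).factorial : ZMod p) := by
    have := Nat.choose_mul_factorial_mul_factorial (show a + 1 ≤ 2 * a by omega)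
    have h' : 2 * a - (a + 1) = a - 1 := by omega
    rw [h'] at this
    exact_mod_cast congrArg (fun n : ℕ => (n : ZMod p)) this
  rw [← heq] at e2
  have hc0 : ((2 * a).choose a : ZMod p) ≠ 0 := by
    intro h0
    rw [h0, zero_mul, zero_mul] at e1
    exact hfac _ (by omega) e1.symm
  have e3 : (a.factorial : ZMod p) * (a.factorial : ZMod p)
      = ((a + 1).factorial : ZMod p) * ((a - 1).factorial : ZMod p) := by
    apply mul_left_cancel₀ hc0
    rw [← mul_assoc, ← mul_assoc, e1, e2]
  have hfa : a = (a - 1) + 1 := by omega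
  have hfact1 : (a.factorial : ZMod p) = (a : ZMod p) * ((a - 1).factorial : ZMod p) := by
    rw [hfa, Nat.factorial_succ]
    push_cast
    ring
  have hfact2 : ((a + 1).factorial : ZMod p) = ((a : ZMod p) + 1) * (a.factorial : ZMod p) := by
    rw [Nat.factorial_succ]; push_cast; ring
  rw [hfact2] at e3
  nth_rewrite 2 [hfact1] at e3
  have e4 : (a.factorial : ZMod p) * ((a - 1).factorial : ZMod p) * (a : ZMod p)
      = (a.factorial : ZMod p) * ((a - 1).factorial : ZMod p) * ((a : ZMod p) + 1) := by
    ring_nf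
    ring_nf at e3
    linear_combination e3
  have := mul_left_cancel₀ (mul_ne_zero (hfac a (by omega)) (hfac (a-1) (by omega))) e4
  have : (1 : ZMod p) = 0 := by linear_combination -this
  exact one_ne_zero this

lemma K3 (S T : Finset F) (hS : 2 ≤ S.card) (hT : 2 ≤ T.card) (j : ℕ)
    (hj : j + 3 ≤ S.card + T.card) :
    ∑ s ∈ S, ∑ t ∈ T, (s - t) * (s + t) ^ j * (lw S s * lw T t) =
      if j + 3 = S.card + T.card
      then ((j.choose (S.card - 2) : F) - (j.choose (S.card - 1) : F))
      else 0 := by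
  have hSne : S.Nonempty := Finset.card_pos.mp (by omega)
  have hTne : T.Nonempty := Finset.card_pos.mp (by omega)
  have expand : ∀ s t : F, (s - t) * (s + t) ^ j * (lw S s * lw T t)
      = ∑ i ∈ range (j + 1),
          ((j.choose i : F) * (s ^ (i+1) * t ^ (j-i) * (lw S s * lw T t))
            - (j.choose i : F) * (s ^ i * t ^ (j-i+1) * (lw S s * lw T t))) := by
    intro s t
    rw [add_pow, Finset.mul_sum, Finset.sum_mul]
    refine Finset.sum_congr rfl fun i hi => ?_
    rw [pow_succ, pow_succ]
    ring
  calc ∑ s ∈ S, ∑ t ∈ T, (s - t) * (s + t) ^ j * (lw S s * lw T t)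
      = ∑ i ∈ range (j + 1), ∑ s ∈ S, ∑ t ∈ T,
          ((j.choose i : F) * (s ^ (i+1) * t ^ (j-i) * (lw S s * lw T t))
            - (j.choose i : F) * (s ^ i * t ^ (j-i+1) * (lw S s * lw T t))) := by
        have e1 : ∀ s ∈ S, ∑ t ∈ T, (s - t) * (s + t) ^ j * (lw S s * lw T t)
            = ∑ i ∈ range (j + 1), ∑ t ∈ T,
              ((j.choose i : F) * (s ^ (i+1) * t ^ (j-i) * (lw S s * lw T t))
                - (j.choose i : F) * (s ^ i * t ^ (j-i+1) * (lw S s * lw T t))) := by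
          intro s _
          rw [Finset.sum_congr rfl fun t _ => expand s t]
          exact Finset.sum_comm
        rw [Finset.sum_congr rfl e1]
        exact Finset.sum_comm
    _ = ∑ i ∈ range (j + 1),
          ((j.choose i : F) * (if i+1+1 = S.card ∧ (j-i)+1 = T.card then (1:F) else 0)
            - (j.choose i : F) * (if i+1 = S.card ∧ (j-i+1)+1 = T.card then (1:F) else 0)) := by
        refine Finset.sum_congr rfl fun i hi => ?_
        have hi' : i ≤ j := by simpa using Nat.lt_succ_iff.mp (Finset.mem_range.mp hi)
        rw [← K2 S T (i+1) (j-i) (by omega) hSne hTne,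
            ← K2 S T i (j-i+1) (by omega) hSne hTne]
        simp only [Finset.sum_sub_distrib, Finset.mul_sum]
    _ = _ := by
        by_cases hcase : j + 3 = S.card + T.card
        · rw [if_pos hcase]
          have h1 : ∀ i ∈ range (j + 1),
              ((j.choose i : F) * (if i+1+1 = S.card ∧ (j-i)+1 = T.card then (1:F) else 0)
                - (j.choose i : F) * (if i+1 = S.card ∧ (j-i+1)+1 = T.card then (1:F) else 0))
              = (if i = S.card - 2 then (j.choose (S.card - 2) : F) else 0)
                - (if i = S.card - 1 then (j.choose (S.card - 1) : F) else 0) := by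
            intro i hi
            have hi' : i ≤ j := Nat.lt_succ_iff.mp (Finset.mem_range.mp hi)
            have hP : (if i+1+1 = S.card ∧ (j-i)+1 = T.card then (1:F) else 0)
                = if i = S.card - 2 then (1:F) else 0 := by
              by_cases h : i = S.card - 2
              · rw [if_pos ⟨by omega, by omega⟩, if_pos h]
              · rw [if_neg (fun hc => h (by omega)), if_neg h]
            have hQ : (if i+1 = S.card ∧ (j-i+1)+1 = T.card then (1:F) else 0)
                = if i = S.card - 1 then (1:F) else 0 := by
              by_cases h : i = S.card - 1
              · rw [if_pos ⟨by omega, by omega⟩, if_pos h]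
              · rw [if_neg (fun hc => h (by omega)), if_neg h]
            rw [hP, hQ]
            split_ifs with h1 h2 h3
            · omega
            · subst h1; ring
            · subst h3; ring
            · ring
          rw [Finset.sum_congr rfl h1, Finset.sum_sub_distrib,
            Finset.sum_ite_eq' (range (j+1)) (S.card - 2) (fun _ => (j.choose (S.card - 2) : F)),
            Finset.sum_ite_eq' (range (j+1)) (S.card - 1) (fun _ => (j.choose (S.card - 1) : F)),
            if_pos (Finset.mem_range.mpr (by omega)), if_pos (Finset.mem_range.mpr (by omega))]
        · rw [if_neg hcase]
          refine Finset.sum_eq_zero fun i hi => ?_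
          have hi' : i ≤ j := Nat.lt_succ_iff.mp (Finset.mem_range.mp hi)
          rw [if_neg (fun ⟨h1', h2'⟩ => hcase (by omega)),
              if_neg (fun ⟨h1', h2'⟩ => hcase (by omega))]
          simp

lemma EH {p : ℕ} (hp : p.Prime) (A : Finset (ZMod p)) (hA : 3 ≤ A.card)
    (hkp : 2 * A.card - 3 ≤ p) : 2 * A.card - 3 ≤ (hadd A A).card := by
  haveI : Fact p.Prime := ⟨hp⟩
  by_contra hcon
  push_neg at hcon
  set k := A.card with hk
  obtain ⟨C, hCsub, hCcard⟩ :=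
    Finset.exists_superset_card_eq (s := hadd A A) (n := 2 * k - 4) (by omega)
      (by rw [ZMod.card]; omega)
  obtain ⟨a0, ha0⟩ := Finset.card_pos.mp (show 0 < A.card by omega)
  set T := A.erase a0 with hT
  have hTcard : T.card = k - 1 := Finset.card_erase_of_mem ha0
  set P : Polynomial (ZMod p) := Lagrange.nodal C id with hP
  have hPm : P.Monic := Lagrange.nodal_monic
  have hdeg : P.natDegree = C.card := Lagrange.natDegree_nodal
  have hvan : ∀ s ∈ A, ∀ t ∈ T, (s - t) * P.eval (s + t) = 0 := by
    intro s hs t ht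
    by_cases hst : s = t
    · rw [hst, sub_self, zero_mul]
    · have hm : s + t ∈ C := hCsub (Finset.mem_image.mpr
        ⟨(s, t), Finset.mem_filter.mpr
          ⟨Finset.mem_product.mpr ⟨hs, Finset.mem_of_mem_erase ht⟩, hst⟩, rfl⟩)
      rw [hP, Lagrange.eval_nodal, Finset.prod_eq_zero hm (by simp), mul_zero]
  have key : (0 : ZMod p) = ∑ j ∈ range (C.card + 1), P.coeff j *
      ∑ s ∈ A, ∑ t ∈ T, (s - t) * (s + t) ^ j * (lw A s * lw T t) := by
    have e1 : ∀ s ∈ A, ∀ t ∈ T, ((s - t) * P.eval (s + t)) * (lw A s * lw T t)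
        = ∑ j ∈ range (C.card + 1),
            P.coeff j * ((s - t) * (s + t) ^ j * (lw A s * lw T t)) := by
      intro s _ t _
      rw [Polynomial.eval_eq_sum_range, hdeg, Finset.mul_sum, Finset.sum_mul]
      exact Finset.sum_congr rfl fun j _ => by ring
    calc (0 : ZMod p)
        = ∑ s ∈ A, ∑ t ∈ T, ((s - t) * P.eval (s + t)) * (lw A s * lw T t) := by
          symm
          refine Finset.sum_eq_zero fun s hs => Finset.sum_eq_zero fun t ht => ?_
          rw [hvan s hs t ht, zero_mul]
      _ = ∑ s ∈ A, ∑ j ∈ range (C.card + 1), ∑ t ∈ T,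
            P.coeff j * ((s - t) * (s + t) ^ j * (lw A s * lw T t)) := by
          refine Finset.sum_congr rfl fun s hs => ?_
          rw [Finset.sum_congr rfl fun t ht => e1 s hs t ht]
          exact Finset.sum_comm
      _ = ∑ j ∈ range (C.card + 1), ∑ s ∈ A, ∑ t ∈ T,
            P.coeff j * ((s - t) * (s + t) ^ j * (lw A s * lw T t)) := Finset.sum_comm
      _ = _ := by simp only [← Finset.mul_sum]
  have hval : ∀ j ∈ range (C.card + 1),
      P.coeff j * (∑ s ∈ A, ∑ t ∈ T, (s - t) * (s + t) ^ j * (lw A s * lw T t))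
      = if j = C.card then ((j.choose (k - 2) : ZMod p) - (j.choose (k - 1) : ZMod p))
        else 0 := by
    intro j hj
    have hjle : j ≤ C.card := Nat.lt_succ_iff.mp (Finset.mem_range.mp hj)
    rw [K3 A T (by omega) (by omega) j (by omega)]
    by_cases hc : j = C.card
    · have hcoeff : P.coeff C.card = 1 := by rw [← hdeg]; exact hPm.coeff_natDegree
      rw [if_pos (by omega), if_pos hc, hc, hcoeff, one_mul]
    · rw [if_neg (by omega), mul_zero, if_neg hc]
  rw [Finset.sum_congr rfl hval, Finset.sum_ite_eq' (range (C.card + 1)) C.card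
      (fun j => ((j.choose (k - 2) : ZMod p) - (j.choose (k - 1) : ZMod p))),
      if_pos (Finset.mem_range.mpr (by omega))] at key
  rw [hCcard] at key
  exact binom_ne hp hA hkp (sub_eq_zero.mp key.symm)

end auxiliary

/-- **Dias da Silva–Hamidoune** (diagonal case): if `A ⊆ ℤ/pℤ` with `|A| ≥ 3`,
then `|A +̂ A| ≥ min (2|A| - 3) p`. -/
theorem dias_da_silva_hamidoune {p : ℕ} (hp : p.Prime) (A : Finset (ZMod p))
    (hA : 3 ≤ A.card) :
    min (2 * A.card - 3) p ≤ (hadd A A).card := by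
  haveI : Fact p.Prime := ⟨hp⟩
  have hcard : A.card ≤ p := by
    have := Finset.card_le_univ A
    rwa [ZMod.card] at this
  rcases le_or_gt (2 * A.card - 3) p with h | h
  · exact le_trans (min_le_left _ _) (EH hp A hA h)
  · have hodd : p % 2 = 1 := (hp.eq_two_or_odd).resolve_left (by omega)
    obtain ⟨A', hsub, hcard'⟩ := Finset.exists_subset_card_eq
      (show (p + 3) / 2 ≤ A.card by omega)
    have hmono : hadd A' A' ⊆ hadd A A := by
      apply Finset.image_subset_image
      exact Finset.filter_subset_filter _ (Finset.product_subset_product hsub hsub)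
    calc min (2 * A.card - 3) p ≤ p := min_le_right _ _
      _ = 2 * A'.card - 3 := by rw [hcard']; omega
      _ ≤ (hadd A' A').card := EH hp A' (by omega) (by omega)
      _ ≤ _ := Finset.card_le_card hmono
end

section
/- If A, B ⊆ Z/pZ with |A|, |B| ≥ 2 and |A+B| ≤ min(|A|+|B|-1, p-2), then A and B are arithmetic progressions with a common difference. -/
open Finset Pointwise

variable {p : ℕ}

/-- AP predicate matching the goal format. -/
def IsAP (d : ZMod p) (X : Finset (ZMod p)) : Prop :=
  ∃ a : ZMod p, X = (Finset.range X.card).image fun k : ℕ => a + (k : ZMod p) * d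

lemma natCast_inj' (hp : p.Prime) {k j : ℕ} (hk : k < p) (hj : j < p)
    (h : (k : ZMod p) = j) : k = j := by
  rw [← ZMod.val_cast_of_lt hk, ← ZMod.val_cast_of_lt hj, h]

lemma apfun_injOn (hp : p.Prime) {d : ZMod p} (hd : d ≠ 0) (a : ZMod p) {n : ℕ} (hn : n ≤ p) :
    Set.InjOn (fun k : ℕ => a + (k : ZMod p) * d) (Finset.range n) := by
  haveI := Fact.mk hp
  intro k hk j hj h
  simp only [coe_range, Set.mem_Iio] at hk hj
  have h2 : (k : ZMod p) * d = (j : ZMod p) * d := by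
    have := add_left_cancel h
    simpa using this
  exact natCast_inj' hp (lt_of_lt_of_le hk hn) (lt_of_lt_of_le hj hn) (mul_right_cancel₀ hd h2)

lemma exists_rep (hp : p.Prime) {d : ZMod p} (hd : d ≠ 0) (a x : ZMod p) :
    ∃ k : ℕ, k < p ∧ x = a + (k : ZMod p) * d := by
  haveI := Fact.mk hp
  haveI : NeZero p := ⟨hp.ne_zero⟩
  refine ⟨((x - a) * d⁻¹).val, ZMod.val_lt _, ?_⟩
  have : ((((x - a) * d⁻¹).val : ℕ) : ZMod p) = (x - a) * d⁻¹ := by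
    simp [ZMod.natCast_val, ZMod.cast_id]
  rw [this, mul_assoc, inv_mul_cancel₀ hd, mul_one]
  ring

lemma forall_mem_of_shift (hp : p.Prime) {d : ZMod p} (hd : d ≠ 0) {X : Finset (ZMod p)}
    (hne : X.Nonempty) (hcl : ∀ x ∈ X, x + d ∈ X) : ∀ z : ZMod p, z ∈ X := by
  obtain ⟨x0, hx0⟩ := hne
  have hk : ∀ k : ℕ, x0 + (k : ZMod p) * d ∈ X := by
    intro k
    induction k with
    | zero => simpa using hx0
    | succ k ih =>
      have h2 := hcl _ ih
      have : x0 + ((k : ZMod p)) * d + d = x0 + ((k + 1 : ℕ) : ZMod p) * d := by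
        push_cast; ring
      rwa [this] at h2
  intro z
  obtain ⟨k, _, hz⟩ := exists_rep hp hd x0 z
  rw [hz]; exact hk k

lemma card_le_p (hp : p.Prime) (X : Finset (ZMod p)) : X.card ≤ p := by
  haveI : NeZero p := ⟨hp.ne_zero⟩
  have := Finset.card_le_univ X
  rwa [ZMod.card] at this

lemma card_of_forall_mem (hp : p.Prime) {X : Finset (ZMod p)} (h : ∀ z : ZMod p, z ∈ X) :
    X.card = p := by
  haveI : NeZero p := ⟨hp.ne_zero⟩
  have : X = Finset.univ := Finset.eq_univ_iff_forall.2 h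
  rw [this, Finset.card_univ, ZMod.card]

lemma ap_of_small_sdiff (hp : p.Prime) {d : ZMod p} (hd : d ≠ 0) {X : Finset (ZMod p)}
    (hne : X.Nonempty) (hXu : X.card < p)
    (h1 : (X \ X.image (· + d)).card ≤ 1) : IsAP d X := by
  haveI := Fact.mk hp
  have hinj : Function.Injective (· + d) := add_left_injective d
  -- the difference is nonempty
  have hdne : X \ X.image (· + d) ≠ ∅ := by
    intro h
    have hsub : X ⊆ X.image (· + d) := by
      intro x hx
      by_contra hx2
      exact (Finset.notMem_empty x) (h ▸ Finset.mem_sdiff.2 ⟨hx, hx2⟩)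
    have heq : X = X.image (· + d) :=
      Finset.eq_of_subset_of_card_le hsub (le_of_eq (Finset.card_image_of_injective _ hinj))
    have hcl : ∀ x ∈ X, x + d ∈ X := by
      intro x hx
      rw [heq]
      exact Finset.mem_image_of_mem _ hx
    have := card_of_forall_mem hp (forall_mem_of_shift hp hd hne hcl)
    omega
  have hcard1 : (X \ X.image (· + d)).card = 1 := by
    have := Finset.card_pos.2 (Finset.nonempty_of_ne_empty hdne)
    omega
  obtain ⟨b₀, hb₀⟩ := Finset.card_eq_one.1 hcard1
  have hb₀X : b₀ ∈ X := (Finset.mem_sdiff.1 (hb₀ ▸ Finset.mem_singleton_self b₀)).1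
  -- every element of X other than b₀ has a predecessor in X
  have hstep : ∀ y ∈ X, y ≠ b₀ → ∃ x ∈ X, y = x + d := by
    intro y hy hyne
    have : y ∉ X \ X.image (· + d) := by rw [hb₀]; simp [hyne]
    have hyim : y ∈ X.image (· + d) := by
      by_contra h2; exact this (Finset.mem_sdiff.2 ⟨hy, h2⟩)
    obtain ⟨x, hx, hxy⟩ := Finset.mem_image.1 hyim
    exact ⟨x, hx, hxy.symm⟩
  set K : Finset ℕ := (Finset.range p).filter (fun k : ℕ => b₀ + (k : ZMod p) * d ∈ X) with hK
  have hK0 : 0 ∈ K := by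
    simp only [hK, Finset.mem_filter, Finset.mem_range]
    exact ⟨hp.pos, by simpa using hb₀X⟩
  have hdown1 : ∀ k : ℕ, k + 1 ∈ K → k ∈ K := by
    intro k hk
    simp only [hK, Finset.mem_filter, Finset.mem_range] at hk ⊢
    obtain ⟨hkp, hkX⟩ := hk
    have hyne : b₀ + ((k + 1 : ℕ) : ZMod p) * d ≠ b₀ := by
      intro h
      have h2 : ((k + 1 : ℕ) : ZMod p) * d = 0 := by
        have := add_left_cancel (h.trans (add_zero b₀).symm)
        simpa using this
      rcases mul_eq_zero.1 h2 with h3 | h3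
      · have : (k + 1 : ℕ) = 0 := natCast_inj' hp hkp hp.pos (by simpa using h3)
        omega
      · exact hd h3
    obtain ⟨x, hx, hxy⟩ := hstep _ hkX hyne
    have heq2 : b₀ + ((k + 1 : ℕ) : ZMod p) * d = b₀ + (k : ZMod p) * d + d := by
      push_cast; ring
    rw [heq2] at hxy
    have hxeq : x = b₀ + (k : ZMod p) * d := add_left_injective d hxy.symm
    refine ⟨by omega, ?_⟩
    rw [← hxeq]; exact hx
  have hdown : ∀ k, k ∈ K → ∀ j : ℕ, j ≤ k → j ∈ K := by
    intro k
    induction k with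
    | zero =>
      intro hk j hj
      have : j = 0 := by omega
      rw [this]; exact hk
    | succ k ih =>
      intro hk j hj
      rcases Nat.eq_or_lt_of_le hj with rfl | hj2
      · exact hk
      · exact ih (hdown1 k hk) j (by omega)
  have hKrange : K = Finset.range K.card := by
    refine (Finset.eq_of_subset_of_card_le ?_ (by simp)).symm
    intro j hj
    rw [Finset.mem_range] at hj
    by_contra hjK
    have hsub : K ⊆ Finset.range j := by
      intro k hk
      rw [Finset.mem_range]
      by_contra h2
      exact hjK (hdown k hk j (by omega))
    have := Finset.card_le_card hsub
    simp at this
    omega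
  have hXeq : X = K.image (fun k : ℕ => b₀ + (k : ZMod p) * d) := by
    apply Finset.Subset.antisymm
    · intro y hy
      obtain ⟨k, hkp, hky⟩ := exists_rep hp hd b₀ y
      refine Finset.mem_image.2 ⟨k, ?_, hky.symm⟩
      simp only [hK, Finset.mem_filter, Finset.mem_range]
      exact ⟨hkp, hky ▸ hy⟩
    · intro y hy
      obtain ⟨k, hk, hky⟩ := Finset.mem_image.1 hy
      simp only [hK, Finset.mem_filter] at hk
      rw [← hky]; exact hk.2
  have hKX : K.card = X.card := by
    rw [hXeq]
    refine (Finset.card_image_of_injOn ?_).symm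
    apply (apfun_injOn hp hd b₀ (le_refl p)).mono
    intro k hk
    simp only [hK, Finset.coe_filter, Set.mem_setOf_eq, coe_range, Set.mem_Iio] at hk ⊢
    simpa using hk.1
  refine ⟨b₀, ?_⟩
  rw [← hKX, ← hKrange]
  exact hXeq

lemma ne_zero_of_isAP {d : ZMod p} {X : Finset (ZMod p)} (h : IsAP d X) (h2 : 2 ≤ X.card) :
    d ≠ 0 := by
  rintro rfl
  obtain ⟨a, ha⟩ := h
  have hsub : X ⊆ {a} := by
    rw [ha]
    intro x hx
    simp only [Finset.mem_image, Finset.mem_range] at hx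
    obtain ⟨k, _, rfl⟩ := hx
    simp
  have := Finset.card_le_card hsub
  simp at this
  omega

lemma isAP_neg (hp : p.Prime) {d : ZMod p} {X : Finset (ZMod p)} (h : IsAP d X) :
    IsAP d (-X) := by
  obtain ⟨a, ha⟩ := h
  set m := X.card with hm
  rcases Nat.eq_zero_or_pos m with h0 | h1
  · have hX : X = ∅ := Finset.card_eq_zero.1 (by rw [← hm]; exact h0)
    refine ⟨0, ?_⟩
    rw [hX]
    simp
  · have hcard : (-X).card = m := by rw [Finset.card_neg]
    refine ⟨-a - ((m - 1 : ℕ) : ZMod p) * d, ?_⟩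
    rw [hcard]
    ext x
    simp only [Finset.mem_neg, Finset.mem_image, Finset.mem_range]
    constructor
    · rintro ⟨y, hy, rfl⟩
      rw [ha] at hy
      simp only [Finset.mem_image, Finset.mem_range] at hy
      obtain ⟨j, hj, rfl⟩ := hy
      refine ⟨m - 1 - j, by omega, ?_⟩
      have h2 : ((m - 1 - j : ℕ) : ZMod p) = ((m - 1 : ℕ) : ZMod p) - (j : ZMod p) := by
        rw [Nat.cast_sub (by omega)]
      rw [h2]; ring
    · rintro ⟨k, hk, rfl⟩
      refine ⟨a + ((m - 1 - k : ℕ) : ZMod p) * d, ?_, ?_⟩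
      · rw [ha]
        exact Finset.mem_image.2 ⟨m - 1 - k, Finset.mem_range.2 (by omega), rfl⟩
      · have h2 : ((m - 1 - k : ℕ) : ZMod p) = ((m - 1 : ℕ) : ZMod p) - (k : ZMod p) := by
          rw [Nat.cast_sub (by omega)]
        rw [h2]; ring

lemma isAP_compl [NeZero p] (hp : p.Prime) {d : ZMod p} (hd : d ≠ 0) {S : Finset (ZMod p)}
    (hS : IsAP d S) : IsAP d Sᶜ := by
  haveI := Fact.mk hp
  haveI : NeZero p := ⟨hp.ne_zero⟩
  obtain ⟨a, ha⟩ := hS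
  set s := S.card with hs
  have hsp : s ≤ p := card_le_p hp S
  have hccard : Sᶜ.card = p - s := by
    rw [Finset.card_compl, ZMod.card]
  have hsub : (Finset.range (p - s)).image (fun k : ℕ => (a + (s : ZMod p) * d) + (k : ZMod p) * d)
      ⊆ Sᶜ := by
    intro x hx
    simp only [Finset.mem_image, Finset.mem_range] at hx
    obtain ⟨k, hk, rfl⟩ := hx
    rw [Finset.mem_compl]
    intro hmem
    rw [ha] at hmem
    simp only [Finset.mem_image, Finset.mem_range] at hmem
    obtain ⟨j, hj, hjeq⟩ := hmem
    have h2 : a + ((s + k : ℕ) : ZMod p) * d = a + (j : ZMod p) * d := by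
      rw [hjeq]; push_cast; ring
    have h3 : ((s + k : ℕ) : ZMod p) = (j : ZMod p) :=
      mul_right_cancel₀ hd (add_left_cancel h2)
    have := natCast_inj' hp (by omega : s + k < p) (by omega : j < p) h3
    omega
  have hcardim : ((Finset.range (p - s)).image
      (fun k : ℕ => (a + (s : ZMod p) * d) + (k : ZMod p) * d)).card = p - s := by
    rw [Finset.card_image_of_injOn (apfun_injOn hp hd _ (by omega : p - s ≤ p)), Finset.card_range]
  refine ⟨a + (s : ZMod p) * d, ?_⟩
  rw [hccard]
  exact (Finset.eq_of_subset_of_card_le hsub (by omega)).symm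

lemma ap_add_ap {d a b : ZMod p} {m n : ℕ} (hm : 1 ≤ m) (hn : 1 ≤ n) :
    ((Finset.range m).image fun k : ℕ => a + (k : ZMod p) * d) +
      ((Finset.range n).image fun k : ℕ => b + (k : ZMod p) * d) =
      (Finset.range (m + n - 1)).image fun k : ℕ => (a + b) + (k : ZMod p) * d := by
  ext x
  simp only [Finset.mem_add, Finset.mem_image, Finset.mem_range]
  constructor
  · rintro ⟨y, ⟨i, hi, rfl⟩, z, ⟨j, hj, rfl⟩, rfl⟩
    refine ⟨i + j, by omega, ?_⟩
    push_cast; ring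
  · rintro ⟨k, hk, rfl⟩
    refine ⟨a + ((min k (m - 1) : ℕ) : ZMod p) * d, ⟨min k (m - 1), by omega, rfl⟩,
      b + ((k - min k (m - 1) : ℕ) : ZMod p) * d, ⟨k - min k (m - 1), by omega, rfl⟩, ?_⟩
    have h2 : min k (m - 1) + (k - min k (m - 1)) = k := by omega
    calc a + ((min k (m - 1) : ℕ) : ZMod p) * d + (b + ((k - min k (m - 1) : ℕ) : ZMod p) * d)
        = (a + b) + (((min k (m - 1) + (k - min k (m - 1)) : ℕ)) : ZMod p) * d := by
          push_cast; ring
      _ = (a + b) + (k : ZMod p) * d := by rw [h2]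

lemma ap_pull (hp : p.Prime) {d : ZMod p} {P X : Finset (ZMod p)} (hP : IsAP d P)
    (hP2 : 2 ≤ P.card) (hX : X.Nonempty)
    (hcard : (P + X).card + 1 = P.card + X.card)
    (hle : (P + X).card ≤ p - 2) : IsAP d X := by
  haveI := Fact.mk hp
  have hd : d ≠ 0 := ne_zero_of_isAP hP hP2
  obtain ⟨a, ha⟩ := hP
  set m := P.card with hm
  have hmp : m ≤ p := card_le_p hp P
  set Q : Finset (ZMod p) := (Finset.range (m - 1)).image (fun k : ℕ => (0 : ZMod p) + (k : ZMod p) * d) with hQ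
  have hQcard : Q.card = m - 1 := by
    rw [hQ, Finset.card_image_of_injOn (apfun_injOn hp hd _ (by omega : m - 1 ≤ p)),
      Finset.card_range]
  have hQne : Q.Nonempty := by
    rw [hQ]
    exact (Finset.nonempty_range_iff.2 (by omega)).image _
  have hdecomp : P = ({a, a + d} : Finset (ZMod p)) + Q := by
    rw [ha, hQ]
    ext x
    simp only [Finset.mem_add, Finset.mem_image, Finset.mem_range, Finset.mem_insert,
      Finset.mem_singleton]
    constructor
    · rintro ⟨k, hk, rfl⟩
      rcases Nat.lt_or_ge k (m - 1) with h2 | h2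
      · exact ⟨a, Or.inl rfl, 0 + (k : ZMod p) * d, ⟨k, h2, rfl⟩, by ring⟩
      · have hk1 : 1 ≤ k := by omega
        refine ⟨a + d, Or.inr rfl, 0 + ((k - 1 : ℕ) : ZMod p) * d, ⟨k - 1, by omega, rfl⟩, ?_⟩
        rw [Nat.cast_sub hk1]
        push_cast; ring
    · rintro ⟨y, hy, z, ⟨k, hk, rfl⟩, rfl⟩
      rcases hy with rfl | rfl
      · exact ⟨k, by omega, by ring⟩
      · exact ⟨k + 1, by omega, by push_cast; ring⟩
  set Y : Finset (ZMod p) := ({a, a + d} : Finset (ZMod p)) + X with hY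
  have hYne : Y.Nonempty := by
    rw [hY]
    exact Finset.Nonempty.add (Finset.insert_nonempty _ _) hX
  have hPX : P + X = Q + Y := by
    rw [hdecomp, hY, add_right_comm, add_comm _ Q]
  have hYX : Y = (X ∪ X.image (· + d)).image (fun x => a + x) := by
    rw [hY]
    ext x
    simp only [Finset.mem_add, Finset.mem_image, Finset.mem_union, Finset.mem_insert,
      Finset.mem_singleton]
    constructor
    · rintro ⟨y, hy, z, hz, rfl⟩
      rcases hy with rfl | rfl
      · exact ⟨z, Or.inl hz, rfl⟩
      · exact ⟨z + d, Or.inr ⟨z, hz, rfl⟩, by ring⟩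
    · rintro ⟨y, hy, rfl⟩
      rcases hy with hy | ⟨z, hz, rfl⟩
      · exact ⟨a, Or.inl rfl, y, hy, rfl⟩
      · exact ⟨a + d, Or.inr rfl, z, hz, by ring⟩
  have hYcard : Y.card = (X ∪ X.image (· + d)).card := by
    rw [hYX]
    exact Finset.card_image_of_injective _ (add_right_injective a)
  have cd := ZMod.cauchy_davenport hp hQne hYne
  have hQYle : (Q + Y).card ≤ p - 2 := by rw [← hPX]; exact hle
  have hYle : Y.card ≤ X.card + 1 := by
    rcases le_or_gt p (Q.card + Y.card - 1) with h2 | h2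
    · rw [min_eq_left h2] at cd
      have := hp.two_le
      omega
    · rw [min_eq_right (by omega)] at cd
      rw [← hPX] at cd
      omega
  have hshiftcard : (X.image (· + d)).card = X.card :=
    Finset.card_image_of_injective _ (add_left_injective d)
  have hdiff : (X \ X.image (· + d)).card ≤ 1 := by
    have := Finset.card_sdiff_add_card X (X.image (· + d))
    have h3 := hYcard ▸ hYle
    omega
  have hXlt : X.card < p := by
    have := hp.two_le
    omega
  exact ap_of_small_sdiff hp hd hX hXlt hdiff

lemma compl_pull [NeZero p] (hp : p.Prime) {d : ZMod p} {A B : Finset (ZMod p)}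
    (hA : A.Nonempty) (hB2 : 2 ≤ B.card) (hS : (A + B).card + 1 = A.card + B.card)
    (hSp : (A + B).card ≤ p - 2) (hN : IsAP d (A + B)ᶜ) : IsAP d A := by
  haveI := Fact.mk hp
  set N := (A + B)ᶜ with hNdef
  have hABp : (A + B).card ≤ p := card_le_p hp _
  have hNcard : N.card = p - (A + B).card := by rw [hNdef, Finset.card_compl, ZMod.card]
  have hN2 : 2 ≤ N.card := by
    have := hp.two_le
    omega
  have hsub : N + (-A) ⊆ Bᶜ := by
    intro x hx
    rw [Finset.mem_add] at hx
    obtain ⟨n, hn, y, hy, rfl⟩ := hx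
    rw [Finset.mem_neg] at hy
    obtain ⟨a, haA, rfl⟩ := hy
    rw [Finset.mem_compl]
    intro hxB
    have : n ∈ A + B := by
      rw [Finset.mem_add]
      exact ⟨a, haA, n + -a, hxB, by ring⟩
    rw [hNdef] at hn
    exact (Finset.mem_compl.1 hn) this
  have hBccard : (Bᶜ).card = p - B.card := by rw [Finset.card_compl, ZMod.card]
  have hBp : B.card ≤ p := card_le_p hp B
  have hNAne : (-A).Nonempty := hA.neg
  have hNne : N.Nonempty := Finset.card_pos.1 (by omega)
  have cd := ZMod.cauchy_davenport hp hNne hNAne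
  have hnegcard : (-A).card = A.card := Finset.card_neg A
  have hsumcard : (N + (-A)).card = p - B.card := by
    have hle := Finset.card_le_card hsub
    rcases le_or_gt p (N.card + (-A).card - 1) with h2 | h2
    · rw [min_eq_left h2] at cd
      have := hp.two_le
      omega
    · rw [min_eq_right (by omega)] at cd
      omega
  have hApull : IsAP d (-A) := by
    refine ap_pull hp hN hN2 hNAne ?_ ?_
    · omega
    · omega
  have := isAP_neg hp hApull
  rwa [neg_neg] at this

def Bt (A B : Finset (ZMod p)) (e : ZMod p) : Finset (ZMod p) := B.filter (fun x => x + e ∈ A)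
def At (A B : Finset (ZMod p)) (e : ZMod p) : Finset (ZMod p) := A ∪ B.image (· + e)

lemma mem_Bt {A B : Finset (ZMod p)} {e x : ZMod p} :
    x ∈ Bt A B e ↔ x ∈ B ∧ x + e ∈ A := Finset.mem_filter

lemma Bt_subset (A B : Finset (ZMod p)) (e : ZMod p) : Bt A B e ⊆ B := Finset.filter_subset _ _

lemma A_subset_At (A B : Finset (ZMod p)) (e : ZMod p) : A ⊆ At A B e :=
  Finset.subset_union_left

lemma inter_eq_Bt (A B : Finset (ZMod p)) (e : ZMod p) :
    A ∩ B.image (· + e) = (Bt A B e).image (· + e) := by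
  ext x
  simp only [Finset.mem_inter, Finset.mem_image, mem_Bt]
  constructor
  · rintro ⟨hxA, b, hbB, rfl⟩
    exact ⟨b, ⟨hbB, hxA⟩, rfl⟩
  · rintro ⟨b, ⟨hbB, hbA⟩, rfl⟩
    exact ⟨hbA, b, hbB, rfl⟩

lemma card_split (A B : Finset (ZMod p)) (e : ZMod p) :
    (At A B e).card + (Bt A B e).card = A.card + B.card := by
  have h1 := Finset.card_union_add_card_inter A (B.image (· + e))
  rw [inter_eq_Bt A B e, Finset.card_image_of_injective _ (add_left_injective e),
    Finset.card_image_of_injective _ (add_left_injective e)] at h1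
  exact h1

lemma At_add_Bt_subset (A B : Finset (ZMod p)) (e : ZMod p) :
    At A B e + Bt A B e ⊆ A + B := by
  intro x hx
  rw [Finset.mem_add] at hx
  obtain ⟨y, hy, b, hb, rfl⟩ := hx
  rw [mem_Bt] at hb
  rw [Finset.mem_add]
  rcases Finset.mem_union.1 hy with hyA | hyim
  · exact ⟨y, hyA, b, hb.1, rfl⟩
  · obtain ⟨c, hc, rfl⟩ := Finset.mem_image.1 hyim
    exact ⟨b + e, hb.2, c, hc, by ring⟩

lemma vosper_aux (hp : p.Prime) (n : ℕ) : ∀ A B : Finset (ZMod p), B.card ≤ n →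
    2 ≤ A.card → 2 ≤ B.card →
    (A + B).card ≤ min (A.card + B.card - 1) (p - 2) →
    ∃ d : ZMod p, IsAP d A ∧ IsAP d B := by
  haveI := Fact.mk hp
  haveI : NeZero p := ⟨hp.ne_zero⟩
  induction n with
  | zero => intro A B h _ hB _; omega
  | succ n ih =>
    intro A B hn hA hB hAB
    have hAne : A.Nonempty := Finset.card_pos.1 (by omega)
    have hBne : B.Nonempty := Finset.card_pos.1 (by omega)
    have hmin2 : (A + B).card ≤ p - 2 := le_trans hAB (min_le_right _ _)
    have cd := ZMod.cauchy_davenport hp hAne hBne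
    have hp2 := hp.two_le
    have hS : (A + B).card + 1 = A.card + B.card := by
      have hmin1 : (A + B).card ≤ A.card + B.card - 1 := le_trans hAB (min_le_left _ _)
      rcases le_or_gt p (A.card + B.card - 1) with h2 | h2
      · rw [min_eq_left h2] at cd; omega
      · rw [min_eq_right (by omega)] at cd; omega
    by_cases hB2 : B.card = 2
    · obtain ⟨b, b', hbb', hBeq⟩ := Finset.card_eq_two.1 hB2
      set d := b' - b with hd
      have hdne : d ≠ 0 := sub_ne_zero.2 (Ne.symm hbb')
      have hBAP : IsAP d B := by
        refine ⟨b, ?_⟩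
        rw [hB2, hBeq]
        ext x
        simp only [Finset.mem_insert, Finset.mem_singleton, Finset.mem_image, Finset.mem_range]
        constructor
        · rintro (rfl | rfl)
          · exact ⟨0, by omega, by simp⟩
          · exact ⟨1, by omega, by rw [hd]; push_cast; ring⟩
        · rintro ⟨k, hk, rfl⟩
          interval_cases k
          · left; simp
          · right; rw [hd]; push_cast; ring
      have hAAP : IsAP d A :=
        ap_pull hp hBAP (by omega) hAne (by rw [add_comm B A]; omega)
          (by rw [add_comm B A]; exact hmin2)
      exact ⟨d, hAAP, hBAP⟩
    have hB3 : 3 ≤ B.card := by omega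
    by_cases hcase : ∃ e ∈ A - B, 2 ≤ (Bt A B e).card ∧ (Bt A B e).card < B.card
    -- Case 1 : useful e-transform exists, use induction hypothesis
    · obtain ⟨e, heE, h2e, hlte⟩ := hcase
      have hAt2 : 2 ≤ (At A B e).card := le_trans hA (Finset.card_le_card (A_subset_At A B e))
      have hsum_le : (At A B e + Bt A B e).card ≤ (A + B).card :=
        Finset.card_le_card (At_add_Bt_subset A B e)
      have hsplit := card_split A B e
      obtain ⟨d, hAtAP, hBtAP⟩ := ih (At A B e) (Bt A B e) (by omega) hAt2 h2e
        (le_min (by omega) (by omega))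
      have hd : d ≠ 0 := ne_zero_of_isAP hAtAP hAt2
      have hAtne : (At A B e).Nonempty := Finset.card_pos.1 (by omega)
      have hBtne : (Bt A B e).Nonempty := Finset.card_pos.1 (by omega)
      have cd2 := ZMod.cauchy_davenport hp hAtne hBtne
      have hcards : (At A B e + Bt A B e).card = (A + B).card := by
        rcases le_or_gt p ((At A B e).card + (Bt A B e).card - 1) with h3 | h3
        · rw [min_eq_left h3] at cd2; omega
        · rw [min_eq_right (by omega)] at cd2; omega
      have hsumeq : At A B e + Bt A B e = A + B :=
        Finset.eq_of_subset_of_card_le (At_add_Bt_subset A B e) (by omega)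
      obtain ⟨a, haeq⟩ := hAtAP
      obtain ⟨b, hbeq⟩ := hBtAP
      have hSAP : IsAP d (A + B) := by
        refine ⟨a + b, ?_⟩
        rw [← hsumeq]
        nth_rewrite 1 [haeq, hbeq]
        rw [ap_add_ap (by omega) (by omega)]
        congr 2
        omega
      have hNAP : IsAP d (A + B)ᶜ := isAP_compl hp hd hSAP
      have hAAP : IsAP d A := compl_pull hp hAne hB hS hmin2 hNAP
      have hBAP : IsAP d B := by
        refine compl_pull hp hBne hA ?_ ?_ ?_ <;> rw [add_comm B A]
        · omega
        · exact hmin2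
        · exact hNAP
      exact ⟨d, hAAP, hBAP⟩
    · -- Case 2/3: every transform is trivial or degenerate
      classical
      push_neg at hcase
      have hdich : ∀ e ∈ A - B, (Bt A B e).card = 1 ∨ Bt A B e = B := by
        intro e he
        have hne : (Bt A B e).Nonempty := by
          obtain ⟨a, haA, b, hbB, rfl⟩ := Finset.mem_sub.1 he
          refine ⟨b, mem_Bt.2 ⟨hbB, ?_⟩⟩
          have : b + (a - b) = a := by ring
          rw [this]; exact haA
        have h1 : 1 ≤ (Bt A B e).card := Finset.card_pos.2 hne
        rcases eq_or_lt_of_le h1 with h | h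
        · exact Or.inl h.symm
        · exact Or.inr (Finset.eq_of_subset_of_card_le (Bt_subset A B e) (hcase e he (by omega)))
      set U := (A - B).filter (fun e => (Bt A B e).card = 1) with hU
      set T := (A - B).filter (fun e => Bt A B e = B) with hT
      have hcover : A - B ⊆ U ∪ T := by
        intro e he
        rcases hdich e he with h | h
        · exact Finset.mem_union_left _ (Finset.mem_filter.2 ⟨he, h⟩)
        · exact Finset.mem_union_right _ (Finset.mem_filter.2 ⟨he, h⟩)
      have hEcard : A.card + B.card ≤ (A - B).card + 1 := by
        have hABneg : A - B = A + (-B) := by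
          ext x
          simp only [Finset.mem_sub, Finset.mem_add, Finset.mem_neg]
          constructor
          · rintro ⟨a, ha, b, hb, rfl⟩
            exact ⟨a, ha, -b, ⟨b, hb, rfl⟩, by ring⟩
          · rintro ⟨a, ha, y, ⟨b, hb, rfl⟩, rfl⟩
            exact ⟨a, ha, b, hb, by ring⟩
        have hBnegne : (-B).Nonempty := hBne.neg
        have cd3 := ZMod.cauchy_davenport hp hAne hBnegne
        rw [Finset.card_neg] at cd3
        rcases le_or_gt p (A.card + B.card - 1) with h3 | h3
        · omega
        · rw [min_eq_right (by omega), ← hABneg] at cd3; omega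
      have hUcard : B.card < U.card := by
        have hcov := Finset.card_le_card hcover
        have hUT := Finset.card_union_le U T
        rcases Finset.eq_empty_or_nonempty T with hTe | hTne
        · have hT0 : T.card = 0 := by rw [hTe]; simp
          omega
        · have hBT : B + T ⊆ A := by
            intro x hx
            rw [Finset.mem_add] at hx
            obtain ⟨b, hb, t, ht, rfl⟩ := hx
            have heq : Bt A B t = B := (Finset.mem_filter.1 ht).2
            have hbt : b ∈ Bt A B t := by rw [heq]; exact hb
            exact (mem_Bt.1 hbt).2
          have cd4 := ZMod.cauchy_davenport hp hBne hTne
          have hle := Finset.card_le_card hBT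
          have h5 : B.card + T.card ≤ A.card + 1 := by
            rcases le_or_gt p (B.card + T.card - 1) with h3 | h3
            · rw [min_eq_left h3] at cd4; omega
            · rw [min_eq_right (by omega)] at cd4; omega
          omega
      set g : ZMod p → ZMod p :=
        fun e => if h : ∃ b, Bt A B e = {b} then h.choose else 0 with hg
      have hgmem : ∀ e ∈ U, Bt A B e = {g e} := by
        intro e he
        have h1 : ∃ b, Bt A B e = {b} := Finset.card_eq_one.1 (Finset.mem_filter.1 he).2
        rw [hg]
        simp only [dif_pos h1]
        exact h1.choose_spec
      have hgB : ∀ e ∈ U, g e ∈ B := fun e he =>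
        (Bt_subset A B e) ((hgmem e he) ▸ Finset.mem_singleton_self (g e))
      obtain ⟨e, heU, e', he'U, hee', hge⟩ :=
        Finset.exists_ne_map_eq_of_card_lt_of_maps_to hUcard hgB
      have hkey : ∀ f ∈ U, At A B f = (A + B).image (fun x => x - g f) := by
        intro f hf
        have hgf : Bt A B f = {g f} := hgmem f hf
        have hgfB : g f ∈ B := hgB f hf
        have hgfA : g f + f ∈ A := (mem_Bt.1 (hgf ▸ Finset.mem_singleton_self (g f))).2
        refine Finset.eq_of_subset_of_card_le ?_ ?_
        · intro x hx
          rcases Finset.mem_union.1 hx with hxA | hxim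
          · exact Finset.mem_image.2 ⟨x + g f, Finset.add_mem_add hxA hgfB, by ring⟩
          · obtain ⟨c, hc, rfl⟩ := Finset.mem_image.1 hxim
            exact Finset.mem_image.2 ⟨(g f + f) + c, Finset.add_mem_add hgfA hc, by ring⟩
        · rw [Finset.card_image_of_injective _ (sub_left_injective (b := g f))]
          have hsplitf := card_split A B f
          have h1 : (Bt A B f).card = 1 := by rw [hgf]; simp
          omega
      have hBsub : B.image (· + e') ⊆ At A B e := by
        have h1 : B.image (· + e') ⊆ At A B e' := Finset.subset_union_right
        rwa [hkey e' he'U, ← hge, ← hkey e heU] at h1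
      have he'1 : (Bt A B e').card = 1 := by rw [hgmem e' he'U]; simp
      have hsd : (B.image (· + e') \ B.image (· + e)).card ≤ 1 := by
        have hsub2 : B.image (· + e') \ B.image (· + e) ⊆ (Bt A B e').image (· + e') := by
          intro x hx
          obtain ⟨hx1, hx2⟩ := Finset.mem_sdiff.1 hx
          have hxAt : x ∈ At A B e := hBsub hx1
          have hxA : x ∈ A := by
            rcases Finset.mem_union.1 hxAt with h | h
            · exact h
            · exact absurd h hx2
          rw [← inter_eq_Bt]
          exact Finset.mem_inter.2 ⟨hxA, hx1⟩
        calc (B.image (· + e') \ B.image (· + e)).card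
            ≤ ((Bt A B e').image (· + e')).card := Finset.card_le_card hsub2
          _ = (Bt A B e').card := Finset.card_image_of_injective _ (add_left_injective e')
          _ = 1 := he'1
      set d := e - e' with hd
      have hdne : d ≠ 0 := sub_ne_zero.2 hee'
      have hBsd : (B \ B.image (· + d)).card ≤ 1 := by
        have hfun : ((· + e') ∘ (· + d)) = (fun x : ZMod p => x + e) := by
          funext x
          simp only [Function.comp_apply]
          rw [hd]; ring
        have himg : (B \ B.image (· + d)).image (· + e')
            = B.image (· + e') \ B.image (· + e) := by
          rw [Finset.image_sdiff _ _ (add_left_injective e'), Finset.image_image, hfun]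
        have hc := Finset.card_image_of_injective (B \ B.image (· + d)) (add_left_injective e')
        rw [himg] at hc
        omega
      have hBlt : B.card < p := by omega
      have hBAP : IsAP d B := ap_of_small_sdiff hp hdne hBne hBlt hBsd
      have hAAP : IsAP d A := ap_pull hp hBAP hB hAne (by rw [add_comm B A]; omega)
        (by rw [add_comm B A]; exact hmin2)
      exact ⟨d, hAAP, hBAP⟩


/-- **Vosper's theorem** (one direction): if `A, B ⊆ ℤ/pℤ` with `|A|, |B| ≥ 2` and
`|A + B| ≤ min (|A| + |B| - 1) (p - 2)`, then `A` and `B` are arithmetic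
progressions with a common difference. -/
theorem vosper {p : ℕ} (hp : p.Prime) (A B : Finset (ZMod p))
    (hA : 2 ≤ A.card) (hB : 2 ≤ B.card)
    (hAB : (A + B).card ≤ min (A.card + B.card - 1) (p - 2)) :
    ∃ d : ZMod p, (∃ a : ZMod p, A = (Finset.range A.card).image fun k : ℕ => a + (k : ZMod p) * d)
      ∧ (∃ b : ZMod p, B = (Finset.range B.card).image fun k : ℕ => b + (k : ZMod p) * d) := by
  obtain ⟨d, ⟨a, ha⟩, ⟨b, hb⟩⟩ := vosper_aux hp B.card A B le_rfl hA hB hAB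
  exact ⟨d, ⟨a, ha⟩, ⟨b, hb⟩⟩
end

section
/- Let p ≥ 7 be prime and d ∈ Z/pZ nonzero viewed inside an order-p subgroup H of Z_p². Suppose A ⊆ Z_p² with |A| = 2p+1 decomposes by cosets of H as A_0 = {0, d, 2d} and A_i = {a_i, a_i+d} (each of size 2) for every nonzero i ∈ Z/pZ, and suppose |A +̂ A| ≤ 4p-1. Then for all nonzero i, j with i ≠ j one has a_j + a_{i-j} ∈ {a_i, a_i + d}, and moreover a_i + a_{-i} = d for all nonzero i. -/
open Finset

lemma mem_hadd {G : Type*} [AddCommGroup G] [DecidableEq G] {A B : Finset G} {x y : G}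
    (hx : x ∈ A) (hy : y ∈ B) (hxy : x ≠ y) : x + y ∈ hadd A B := by
  apply Finset.mem_image.mpr
  exact ⟨(x, y), Finset.mem_filter.mpr ⟨Finset.mem_product.mpr ⟨hx, hy⟩, hxy⟩, rfl⟩

/-- Parts 2 and 5 of Lemma 2.13. `H` is the order-`p` subgroup of `ℤ_p²` given as
the kernel of a surjective homomorphism `φ`, `d ∈ H` is nonzero, and `A ⊆ ℤ_p²`
with `|A| = 2p+1` decomposes by cosets as `A_0 = {0, d, 2d}` and
`A_i = {a_i, a_i + d}` for nonzero `i`. If `|A +̂ A| ≤ 4p - 1`, then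
`a_j + a_{i-j} ∈ {a_i, a_i + d}` for all nonzero `i ≠ j` (`j` nonzero), and
`a_i + a_{-i} = d` for all nonzero `i`. -/
theorem lemma_2_13 {p : ℕ} [Fact p.Prime] (h7 : 7 ≤ p)
    (φ : (ZMod p × ZMod p) →+ ZMod p) (hφ : Function.Surjective φ)
    (d : ZMod p × ZMod p) (hd : d ≠ 0) (hdH : φ d = 0)
    (A : Finset (ZMod p × ZMod p)) (hA : A.card = 2 * p + 1)
    (a : ZMod p → ZMod p × ZMod p)
    (hA0 : (A.filter fun x => φ x = 0) = {0, d, 2 • d})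
    (hAi : ∀ i : ZMod p, i ≠ 0 → (A.filter fun x => φ x = i) = {a i, a i + d})
    (hcard : ∀ i : ZMod p, i ≠ 0 → (A.filter fun x => φ x = i).card = 2)
    (hsmall : (hadd A A).card ≤ 4 * p - 1) :
    (∀ i j : ZMod p, i ≠ 0 → j ≠ 0 → i ≠ j →
        a j + a (i - j) ∈ ({a i, a i + d} : Finset (ZMod p × ZMod p))) ∧
    (∀ i : ZMod p, i ≠ 0 → a i + a (-i) = d) := by
  classical
  have hp : p.Prime := Fact.out
  haveI : NeZero p := ⟨hp.pos.ne'⟩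
  -- basic facts about multiples of d
  have hnatne : ∀ k : ℕ, k ≠ 0 → k < p → ((k : ZMod p)) ≠ 0 := by
    intro k h0 hkp h
    rw [ZMod.natCast_eq_zero_iff] at h
    exact absurd (Nat.le_of_dvd (Nat.pos_of_ne_zero h0) h) (by omega)
  have hkd : ∀ k : ℕ, k ≠ 0 → k < p → k • d ≠ 0 := by
    intro k hk hkp h
    have h1 : (k : ZMod p) • d = 0 := by rwa [Nat.cast_smul_eq_nsmul]
    have hk0 : (k : ZMod p) ≠ 0 := hnatne k hk hkp
    apply hd
    calc d = (k : ZMod p)⁻¹ • ((k : ZMod p) • d) := by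
            rw [smul_smul, inv_mul_cancel₀ hk0, one_smul]
    _ = 0 := by rw [h1, smul_zero]
  have hdk' : ∀ k l : ℕ, k < l → l ≤ 6 → k • d ≠ l • d := by
    intro k l hkl hl h
    have h2 : k • d + (l - k) • d = k • d + 0 := by
      rw [← add_nsmul, Nat.add_sub_cancel' hkl.le, add_zero, ← h]
    exact hkd (l - k) (by omega) (by omega) (add_left_cancel h2)
  -- membership facts
  have hmem0 : (0 : ZMod p × ZMod p) ∈ A := by
    have : (0 : ZMod p × ZMod p) ∈ A.filter fun x => φ x = 0 := by rw [hA0]; simp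
    exact (Finset.mem_filter.mp this).1
  have hmemd : d ∈ A := by
    have : d ∈ A.filter fun x => φ x = 0 := by rw [hA0]; simp
    exact (Finset.mem_filter.mp this).1
  have hmem2d : (2 • d) ∈ A := by
    have : (2 • d) ∈ A.filter fun x => φ x = 0 := by rw [hA0]; simp
    exact (Finset.mem_filter.mp this).1
  have hφ2d : φ (2 • d) = 0 := by rw [map_nsmul, hdH, smul_zero]
  have hmema : ∀ i : ZMod p, i ≠ 0 → a i ∈ A ∧ φ (a i) = i := by
    intro i hi
    have : a i ∈ A.filter fun x => φ x = i := by rw [hAi i hi]; simp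
    exact Finset.mem_filter.mp this
  have hmema' : ∀ i : ZMod p, i ≠ 0 → a i + d ∈ A ∧ φ (a i + d) = i := by
    intro i hi
    have : a i + d ∈ A.filter fun x => φ x = i := by rw [hAi i hi]; simp
    exact Finset.mem_filter.mp this
  set S := hadd A A with hS
  -- lower-bound subsets of the fibers of S
  have hFsub : ∀ i : ZMod p, i ≠ 0 →
      ({a i, a i + d, a i + 2 • d, a i + 3 • d} : Finset (ZMod p × ZMod p)) ⊆
        S.filter fun x => φ x = i := by
    intro i hi x hx
    obtain ⟨haiA, hφai⟩ := hmema i hi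
    obtain ⟨haiA', hφai'⟩ := hmema' i hi
    have hne0 : (0 : ZMod p × ZMod p) ≠ a i := fun h => hi (by rw [← hφai, ← h, map_zero])
    have hne0' : (0 : ZMod p × ZMod p) ≠ a i + d := fun h => hi (by rw [← hφai', ← h, map_zero])
    have hned : d ≠ a i + d := fun h => hi (by rw [← hφai', ← h, hdH])
    have hne2d : (2 • d) ≠ a i + d := fun h => hi (by rw [← hφai', ← h, hφ2d])
    simp only [Finset.mem_insert, Finset.mem_singleton] at hx
    rcases hx with h | h | h | h
    · have hm := mem_hadd hmem0 haiA hne0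
      rw [zero_add] at hm
      exact Finset.mem_filter.mpr ⟨h ▸ hm, by rw [h, hφai]⟩
    · have hm := mem_hadd hmem0 haiA' hne0'
      rw [zero_add] at hm
      exact Finset.mem_filter.mpr ⟨h ▸ hm, by rw [h, hφai']⟩
    · have hm := mem_hadd hmemd haiA' hned
      have he : d + (a i + d) = a i + 2 • d := by rw [two_nsmul]; abel
      rw [he] at hm
      exact Finset.mem_filter.mpr ⟨h ▸ hm, by
        rw [h, map_add, hφai, map_nsmul, hdH, smul_zero, add_zero]⟩
    · have hm := mem_hadd hmem2d haiA' hne2d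
      have he : 2 • d + (a i + d) = a i + 3 • d := by
        rw [two_nsmul, show (3:ℕ) • d = d + d + d by rw [show (3:ℕ) = 2 + 1 by rfl, add_nsmul,
          two_nsmul, one_nsmul]]
        abel
      rw [he] at hm
      exact Finset.mem_filter.mpr ⟨h ▸ hm, by
        rw [h, map_add, hφai, map_nsmul, hdH, smul_zero, add_zero]⟩
  have hF0sub : ({d, 2 • d, 3 • d} : Finset (ZMod p × ZMod p)) ⊆
      S.filter fun x => φ x = 0 := by
    intro x hx
    have hφ3d : φ (3 • d) = 0 := by rw [map_nsmul, hdH, smul_zero]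
    simp only [Finset.mem_insert, Finset.mem_singleton] at hx
    rcases hx with h | h | h
    · have hm := mem_hadd hmem0 hmemd (fun h => hd h.symm)
      rw [zero_add] at hm
      exact Finset.mem_filter.mpr ⟨h ▸ hm, by rw [h, hdH]⟩
    · have hm := mem_hadd hmem0 hmem2d (fun h => hkd 2 (by omega) (by omega) h.symm)
      rw [zero_add] at hm
      exact Finset.mem_filter.mpr ⟨h ▸ hm, by rw [h, hφ2d]⟩
    · have hm := mem_hadd hmemd hmem2d (by
        intro h
        exact hdk' 1 2 (by omega) (by omega) (by rwa [one_nsmul]))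
      have he : d + 2 • d = 3 • d := by
        rw [show (3:ℕ) = 1 + 2 by rfl, add_nsmul, one_nsmul]
      rw [he] at hm
      exact Finset.mem_filter.mpr ⟨h ▸ hm, by rw [h, hφ3d]⟩
  -- cardinalities of the lower-bound sets
  have hne01 : ∀ x : ZMod p × ZMod p, ∀ l : ℕ, l ≠ 0 → l ≤ 6 → x ≠ x + l • d := by
    intro x l h0 hl h
    exact hkd l h0 (by omega) (left_eq_add.mp h)
  have hnekl : ∀ x : ZMod p × ZMod p, ∀ k l : ℕ, k < l → l ≤ 6 → x + k • d ≠ x + l • d := by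
    intro x k l hkl hl h
    exact hdk' k l hkl hl (add_left_cancel h)
  have hcardF : ∀ x : ZMod p × ZMod p,
      ({x, x + d, x + 2 • d, x + 3 • d} : Finset (ZMod p × ZMod p)).card = 4 := by
    intro x
    rw [Finset.card_insert_of_notMem, Finset.card_insert_of_notMem,
      Finset.card_insert_of_notMem, Finset.card_singleton]
    · simp only [Finset.mem_singleton]
      exact hnekl x 2 3 (by omega) (by omega)
    · simp only [Finset.mem_insert, Finset.mem_singleton]
      push_neg
      exact ⟨fun h => hdk' 1 2 (by omega) (by omega) (by rw [one_nsmul]; exact add_left_cancel h),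
        fun h => hdk' 1 3 (by omega) (by omega) (by rw [one_nsmul]; exact add_left_cancel h)⟩
    · simp only [Finset.mem_insert, Finset.mem_singleton]
      push_neg
      exact ⟨fun h => hd (left_eq_add.mp h),
        hne01 x 2 (by omega) (by omega), hne01 x 3 (by omega) (by omega)⟩
  have hcardF0 : ({d, 2 • d, 3 • d} : Finset (ZMod p × ZMod p)).card = 3 := by
    rw [Finset.card_insert_of_notMem, Finset.card_insert_of_notMem, Finset.card_singleton]
    · simp only [Finset.mem_singleton]
      exact hdk' 2 3 (by omega) (by omega)
    · simp only [Finset.mem_insert, Finset.mem_singleton]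
      push_neg
      exact ⟨fun h => hdk' 1 2 (by omega) (by omega) (by rw [one_nsmul]; exact h),
        fun h => hdk' 1 3 (by omega) (by omega) (by rw [one_nsmul]; exact h)⟩
  -- counting
  have hsum : S.card = ∑ i : ZMod p, (S.filter fun x => φ x = i).card :=
    Finset.card_eq_sum_card_fiberwise (fun x _ => Finset.mem_univ _)
  have hlow : ∀ i : ZMod p, (if i = 0 then 3 else 4) ≤ (S.filter fun x => φ x = i).card := by
    intro i
    by_cases hi : i = 0
    · rw [if_pos hi, hi, ← hcardF0]
      exact Finset.card_le_card hF0sub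
    · rw [if_neg hi, ← hcardF (a i)]
      exact Finset.card_le_card (hFsub i hi)
  have hsumlow : (∑ i : ZMod p, (if i = 0 then 3 else 4)) = 4 * p - 1 := by
    rw [← Finset.add_sum_erase _ _ (Finset.mem_univ (0 : ZMod p))]
    rw [if_pos rfl]
    rw [Finset.sum_congr rfl (fun i hi => if_neg (Finset.ne_of_mem_erase hi)),
      Finset.sum_const, Finset.card_erase_of_mem (Finset.mem_univ _), Finset.card_univ,
      ZMod.card, smul_eq_mul]
    omega
  have htot : (∑ i : ZMod p, (if i = 0 then 3 else 4)) =
      ∑ i : ZMod p, (S.filter fun x => φ x = i).card := by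
    refine le_antisymm (Finset.sum_le_sum fun i _ => hlow i) ?_
    rw [← hsum, hsumlow]
    exact hsmall
  have heq : ∀ i : ZMod p, (S.filter fun x => φ x = i).card = if i = 0 then 3 else 4 := by
    intro i
    exact ((Finset.sum_eq_sum_iff_of_le (fun i _ => hlow i)).mp htot i (Finset.mem_univ i)).symm
  have hfib : ∀ i : ZMod p, i ≠ 0 → (S.filter fun x => φ x = i) =
      {a i, a i + d, a i + 2 • d, a i + 3 • d} :=
    fun i hi => (Finset.eq_of_subset_of_card_le (hFsub i hi)
      (by rw [heq i, if_neg hi, hcardF])).symm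
  have hfib0 : (S.filter fun x => φ x = 0) = {d, 2 • d, 3 • d} :=
    (Finset.eq_of_subset_of_card_le hF0sub (by rw [heq 0, if_pos rfl, hcardF0])).symm
  -- the key structural facts
  have keyi : ∀ i : ZMod p, i ≠ 0 → ∀ x y : ZMod p × ZMod p, x ∈ A → y ∈ A → x ≠ y →
      φ x + φ y = i →
      x + y = a i ∨ x + y = a i + d ∨ x + y = a i + 2 • d ∨ x + y = a i + 3 • d := by
    intro i hi x y hx hy hxy hφxy
    have hm : x + y ∈ S.filter fun z => φ z = i :=
      Finset.mem_filter.mpr ⟨mem_hadd hx hy hxy, by rw [map_add, hφxy]⟩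
    rw [hfib i hi] at hm
    simpa only [Finset.mem_insert, Finset.mem_singleton] using hm
  have key0 : ∀ x y : ZMod p × ZMod p, x ∈ A → y ∈ A → x ≠ y → φ x + φ y = 0 →
      x + y = d ∨ x + y = 2 • d ∨ x + y = 3 • d := by
    intro x y hx hy hxy hφxy
    have hm : x + y ∈ S.filter fun z => φ z = 0 :=
      Finset.mem_filter.mpr ⟨mem_hadd hx hy hxy, by rw [map_add, hφxy]⟩
    rw [hfib0] at hm
    simpa only [Finset.mem_insert, Finset.mem_singleton] using hm
  -- nonzero small scalars in ZMod p
  have h20 : (2 : ZMod p) ≠ 0 := by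
    have := hnatne 2 (by omega) (by omega); simpa using this
  have h30 : (3 : ZMod p) ≠ 0 := by
    have := hnatne 3 (by omega) (by omega); simpa using this
  -- Part 5
  have P5 : ∀ i : ZMod p, i ≠ 0 → a i + a (-i) = d := by
    intro i hi
    have hi' : -i ≠ 0 := neg_ne_zero.mpr hi
    obtain ⟨hA1, hφ1⟩ := hmema i hi
    obtain ⟨hA2, hφ2⟩ := hmema (-i) hi'
    obtain ⟨hA1', hφ1'⟩ := hmema' i hi
    obtain ⟨hA2', hφ2'⟩ := hmema' (-i) hi'
    have hne : a i ≠ a (-i) := by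
      intro h
      have hii : i = -i := by
        have hc := congrArg φ h
        rwa [hφ1, hφ2] at hc
      have : (2 : ZMod p) * i = 0 := by linear_combination hii
      rcases mul_eq_zero.mp this with h' | h'
      · exact h20 h'
      · exact hi h'
    have hs1 := key0 (a i) (a (-i)) hA1 hA2 hne (by rw [hφ1, hφ2, add_neg_cancel])
    have hs2 := key0 (a i + d) (a (-i) + d) hA1' hA2'
      (fun h => hne (add_right_cancel h)) (by rw [hφ1', hφ2']; ring)
    have hrw : (a i + d) + (a (-i) + d) = (a i + a (-i)) + 2 • d := by
      rw [two_nsmul]; abel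
    rw [hrw] at hs2
    rcases hs1 with h | h | h
    · exact h
    · exfalso
      rw [h, ← add_nsmul] at hs2
      rcases hs2 with h' | h' | h'
      · exact hdk' 1 4 (by omega) (by omega) (by rw [one_nsmul]; exact h'.symm)
      · exact hdk' 2 4 (by omega) (by omega) h'.symm
      · exact hdk' 3 4 (by omega) (by omega) h'.symm
    · exfalso
      rw [h, ← add_nsmul] at hs2
      rcases hs2 with h' | h' | h'
      · exact hdk' 1 5 (by omega) (by omega) (by rw [one_nsmul]; exact h'.symm)
      · exact hdk' 2 5 (by omega) (by omega) h'.symm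
      · exact hdk' 3 5 (by omega) (by omega) h'.symm
  -- Part 2, generic case
  have P2' : ∀ i j : ZMod p, i ≠ 0 → j ≠ 0 → i - j ≠ 0 → j ≠ i - j →
      a j + a (i - j) = a i ∨ a j + a (i - j) = a i + d := by
    intro i j hi hj hij hjj
    obtain ⟨hA1, hφ1⟩ := hmema j hj
    obtain ⟨hA2, hφ2⟩ := hmema (i - j) hij
    obtain ⟨hA1', hφ1'⟩ := hmema' j hj
    obtain ⟨hA2', hφ2'⟩ := hmema' (i - j) hij
    have hne : a j ≠ a (i - j) := by
      intro h
      apply hjj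
      have hc := congrArg φ h
      rwa [hφ1, hφ2] at hc
    have hs1 := keyi i hi (a j) (a (i - j)) hA1 hA2 hne (by rw [hφ1, hφ2]; ring)
    have hs2 := keyi i hi (a j + d) (a (i - j) + d) hA1' hA2'
      (fun h => hne (add_right_cancel h)) (by rw [hφ1', hφ2']; ring)
    have hrw : (a j + d) + (a (i - j) + d) = (a j + a (i - j)) + 2 • d := by
      rw [two_nsmul]; abel
    rw [hrw] at hs2
    rcases hs1 with h | h | h | h
    · exact Or.inl h
    · exact Or.inr h
    · exfalso
      rw [h, add_assoc, ← add_nsmul] at hs2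
      rcases hs2 with h' | h' | h' | h'
      · exact hkd 4 (by omega) (by omega) (add_eq_left.mp h')
      · exact hdk' 1 4 (by omega) (by omega)
          (by rw [one_nsmul]; exact (add_left_cancel h').symm)
      · exact hdk' 2 4 (by omega) (by omega) (add_left_cancel h').symm
      · exact hdk' 3 4 (by omega) (by omega) (add_left_cancel h').symm
    · exfalso
      rw [h, add_assoc, ← add_nsmul] at hs2
      rcases hs2 with h' | h' | h' | h'
      · exact hkd 5 (by omega) (by omega) (add_eq_left.mp h')
      · exact hdk' 1 5 (by omega) (by omega)
          (by rw [one_nsmul]; exact (add_left_cancel h').symm)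
      · exact hdk' 2 5 (by omega) (by omega) (add_left_cancel h').symm
      · exact hdk' 3 5 (by omega) (by omega) (add_left_cancel h').symm
  refine ⟨?_, P5⟩
  intro i j hi hj hij
  by_cases hjj : j = i - j
  · -- degenerate case : i = 2j
    rw [← hjj]
    have h2j : j + j = i := by linear_combination hjj
    obtain ⟨hA1, hφ1⟩ := hmema j hj
    obtain ⟨hA1', hφ1'⟩ := hmema' j hj
    have hnejd : a j ≠ a j + d := fun h => hd (left_eq_add.mp h)
    have hs0 := keyi i hi (a j) (a j + d) hA1 hA1' hnejd (by rw [hφ1, hφ1', ← h2j])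
    -- auxiliary relation from P2' at (-j, j)
    have hnj : -j ≠ 0 := neg_ne_zero.mpr hj
    have hnij : -j - j ≠ 0 := by
      intro h
      apply hi
      rw [← h2j]
      linear_combination -h
    have hj3 : j ≠ -j - j := by
      intro h
      have h3 : (3 : ZMod p) * j = 0 := by linear_combination h
      rcases mul_eq_zero.mp h3 with h' | h'
      · exact h30 h'
      · exact hj h'
    have haux := P2' (-j) j hnj hj hnij hj3
    have hidx : -j - j = -i := by rw [← h2j]; ring
    rw [hidx] at haux
    have hP5i := P5 i hi
    have hP5j := P5 j hj
    -- a (-i) = d - a i,  a (-j) = d - a j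
    have hnegi : a (-i) = d - a i := by linear_combination hP5i
    have hnegj : a (-j) = d - a j := by linear_combination hP5j
    rw [hnegi, hnegj] at haux
    simp only [Finset.mem_insert, Finset.mem_singleton]
    rcases hs0 with h | h | h | h
    · -- a j + (a j + d) = a i : contradiction
      exfalso
      rcases haux with h' | h'
      · apply hd
        linear_combination h - h'
      · apply hkd 2 (by omega) (by omega)
        rw [two_nsmul]
        linear_combination h - h'
    · left
      linear_combination h
    · right
      rw [two_nsmul] at h
      linear_combination h
    · -- a j + (a j + d) = a i + 3 • d : contradiction
      exfalso
      rw [show (3:ℕ) • d = d + d + d by rw [show (3:ℕ) = 2 + 1 by rfl, add_nsmul, two_nsmul,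
        one_nsmul]] at h
      rcases haux with h' | h'
      · apply hkd 2 (by omega) (by omega)
        rw [two_nsmul]
        linear_combination h' - h
      · apply hd
        linear_combination h' - h
  · have hij0 : i - j ≠ 0 := sub_ne_zero.mpr hij
    rcases P2' i j hi hj hij0 hjj with h | h
    · simp only [Finset.mem_insert, Finset.mem_singleton]
      exact Or.inl h
    · simp only [Finset.mem_insert, Finset.mem_singleton]
      exact Or.inr h
end

section
/- Let p ≥ 7 be prime. Suppose (a_i)_{i=1}^{p-1} are elements of Z/pZ (identified with an order-p subgroup H via generator a_1, say) satisfying the recurrence a_{i+1} = a_1 + a_i + μ_i·d for integers μ_i, where μ_i ∈ {0,1} for 3 ≤ i ≤ p-1, μ_2 ∈ {-2,-1,0,1}, and a_{p-1} = d - a_1 for some fixed element d. Then Σ_{i=2}^{p-1} μ_i = 1 (as an integer, not just mod p). -/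
open Finset

/-- The counting argument concluding Case 1A. Elements `a_1, …, a_{p-1}` of `ℤ/pℤ`
satisfy the recurrence `a_i = a_1 + a_{i-1} + μ_i • d` for `2 ≤ i ≤ p-1`, where the
integers `μ_i` satisfy `μ_i ∈ {0,1}` for `3 ≤ i ≤ p-1` and `μ_2 ∈ {-2,-1,0,1}`,
with `d ≠ 0` and `a_{p-1} = d - a_1`. Then `Σ_{i=2}^{p-1} μ_i = 1` exactly
(as an integer, not just mod `p`). -/
theorem mu_sum_eq_one {p : ℕ} (hp : p.Prime) (h7 : 7 ≤ p)
    (a : ℕ → ZMod p) (d : ZMod p) (hd : d ≠ 0) (μ : ℕ → ℤ)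
    (hrec : ∀ i : ℕ, 2 ≤ i → i ≤ p - 1 → a i = a 1 + a (i - 1) + μ i • d)
    (hμ2 : μ 2 = -2 ∨ μ 2 = -1 ∨ μ 2 = 0 ∨ μ 2 = 1)
    (hμ : ∀ i : ℕ, 3 ≤ i → i ≤ p - 1 → μ i = 0 ∨ μ i = 1)
    (hlast : a (p - 1) = d - a 1) :
    ∑ i ∈ Finset.Icc 2 (p - 1), μ i = 1 := by
  haveI : Fact p.Prime := ⟨hp⟩
  set S : ℤ := ∑ i ∈ Finset.Icc 2 (p - 1), μ i with hS
  -- closed form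
  have key : ∀ i : ℕ, 1 ≤ i → i ≤ p - 1 →
      a i = (i : ℤ) • a 1 + (∑ j ∈ Finset.Icc 2 i, μ j) • d := by
    intro i
    induction i with
    | zero => intro h; omega
    | succ n ih =>
      intro h1 h2
      rcases Nat.eq_zero_or_pos n with hn | hn
      · subst hn
        simp [show Finset.Icc 2 1 = (∅ : Finset ℕ) by decide]
      · have h2' : 2 ≤ n + 1 := by omega
        have hr := hrec (n + 1) h2' h2
        simp only [Nat.add_sub_cancel] at hr
        rw [hr, ih hn (by omega)]
        rw [Finset.sum_Icc_succ_top (by omega : 2 ≤ n + 1)]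
        push_cast
        simp only [zsmul_eq_mul, add_smul, one_smul]
        push_cast
        ring
  have hfin := key (p - 1) (by omega) le_rfl
  rw [hlast] at hfin
  have hcast : (((p - 1 : ℕ) : ℤ) : ZMod p) = -1 := by
    have : ((p : ℕ) : ZMod p) = 0 := ZMod.natCast_self p
    push_cast [Nat.cast_sub (by omega : 1 ≤ p)]
    rw [this]; ring
  rw [zsmul_eq_mul, zsmul_eq_mul, hcast] at hfin
  -- d - a1 = -1 * a1 + S * d
  have hSd : ((S - 1 : ℤ) : ZMod p) * d = 0 := by
    push_cast
    linear_combination -hfin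
  have hS1 : ((S - 1 : ℤ) : ZMod p) = 0 := by
    rcases mul_eq_zero.mp hSd with h | h
    · exact h
    · exact absurd h hd
  have hdvd : (p : ℤ) ∣ S - 1 := (ZMod.intCast_zmod_eq_zero_iff_dvd _ _).mp hS1
  -- bounds
  have hsplit : Finset.Icc 2 (p - 1) = insert 2 (Finset.Icc 3 (p - 1)) := by
    ext x; simp only [Finset.mem_Icc, Finset.mem_insert]; omega
  have hSsplit : S = μ 2 + ∑ i ∈ Finset.Icc 3 (p - 1), μ i := by
    rw [hS, hsplit, Finset.sum_insert (by simp)]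
  have hlb : (0 : ℤ) ≤ ∑ i ∈ Finset.Icc 3 (p - 1), μ i :=
    Finset.sum_nonneg (fun i hi => by
      rcases hμ i (Finset.mem_Icc.mp hi).1 (Finset.mem_Icc.mp hi).2 with h | h <;> omega)
  have hub : ∑ i ∈ Finset.Icc 3 (p - 1), μ i ≤ (p : ℤ) - 3 := by
    calc ∑ i ∈ Finset.Icc 3 (p - 1), μ i ≤ ∑ i ∈ Finset.Icc 3 (p - 1), 1 :=
          Finset.sum_le_sum (fun i hi => by
            rcases hμ i (Finset.mem_Icc.mp hi).1 (Finset.mem_Icc.mp hi).2 with h | h <;> omega)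
      _ = ((Finset.Icc 3 (p - 1)).card : ℤ) := by simp
      _ = (p : ℤ) - 3 := by
          rw [Nat.card_Icc]
          have : p - 1 + 1 - 3 = p - 3 := by omega
          rw [this, Nat.cast_sub (by omega)]; norm_num
  have hp7 : (7 : ℤ) ≤ p := by exact_mod_cast h7
  have hSlb : (-2 : ℤ) ≤ S := by
    rcases hμ2 with h | h | h | h <;> rw [h] at hSsplit <;> linarith
  have hSub : S ≤ (p : ℤ) - 2 := by
    rcases hμ2 with h | h | h | h <;> rw [h] at hSsplit <;> linarith
  rcases hdvd with ⟨k, hk⟩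
  have hk0 : S - 1 = 0 := by
    rcases lt_trichotomy k 0 with h0 | h0 | h0
    · exfalso
      have hk1 : k ≤ -1 := by omega
      have := mul_le_mul_of_nonneg_left hk1 (by linarith : (0 : ℤ) ≤ (p : ℤ))
      linarith
    · rw [h0, mul_zero] at hk; exact hk
    · exfalso
      have hk1 : 1 ≤ k := by omega
      have := mul_le_mul_of_nonneg_left hk1 (by linarith : (0 : ℤ) ≤ (p : ℤ))
      linarith
  linarith
end

section
/- Let p ≥ 5 be prime, H an order-p subgroup of Z_p², A ⊆ Z_p² with |A| = 2p+1, coset pieces A_i and B_i = (A +̂ A) ∩ H_i, with |A_0| ≥ (p+3)/2 maximal among the |A_i|. Let ℓ be the number of nonzero i with A_i ≠ ∅ and |A_0|+|A_i|-1 ≥ p, and s the number of nonzero i with A_i ≠ ∅ and |A_0|+|A_i|-1 < p. Then |A +̂ A| ≥ (ℓ+1)p + s|A_0|. -/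
open Finset

lemma exists_equiv {p : ℕ} [Fact p.Prime] (φ : (ZMod p × ZMod p) →+ ZMod p)
    (hφ : Function.Surjective φ) :
    ∃ ψ : (ZMod p × ZMod p) ≃+ (ZMod p × ZMod p), ∀ x, (ψ x).2 = φ x := by
  have key : ∀ v : ZMod p × ZMod p, φ v = v.1 * φ (1,0) + v.2 * φ (0,1) := by
    rintro ⟨x, y⟩
    have hv : (x, y) = x.val • ((1 : ZMod p), (0 : ZMod p)) + y.val • (0, 1) := by
      simp [Prod.ext_iff, nsmul_eq_mul, ZMod.natCast_val, ZMod.cast_id]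
    rw [hv, map_add, map_nsmul, map_nsmul, nsmul_eq_mul, nsmul_eq_mul]
    simp [ZMod.natCast_val, ZMod.cast_id]
  by_cases hb : φ (0, 1) = 0
  · -- then φ (1,0) ≠ 0
    have ha : φ (1, 0) ≠ 0 := by
      intro ha
      obtain ⟨z, hz⟩ := hφ 1
      rw [key z, ha, hb] at hz
      simp at hz
    set f : (ZMod p × ZMod p) →+ (ZMod p × ZMod p) :=
      (AddMonoidHom.snd (ZMod p) (ZMod p)).prod φ with hf
    have hinj : Function.Injective f := by
      intro u v huv
      rw [Prod.ext_iff] at huv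
      obtain ⟨h2, hφuv⟩ := huv
      have h2' : u.2 = v.2 := h2
      have hφuv' : φ u = φ v := hφuv
      rw [key u, key v, h2'] at hφuv'
      replace hφuv := hφuv'
      have : u.1 * φ (1,0) = v.1 * φ (1,0) := by
        have := add_right_cancel hφuv
        exact this
      exact Prod.ext (mul_right_cancel₀ ha this) h2'
    exact ⟨AddEquiv.ofBijective f (Finite.injective_iff_bijective.mp hinj), fun x => rfl⟩
  · set f : (ZMod p × ZMod p) →+ (ZMod p × ZMod p) :=
      (AddMonoidHom.fst (ZMod p) (ZMod p)).prod φ with hf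
    have hinj : Function.Injective f := by
      intro u v huv
      rw [Prod.ext_iff] at huv
      obtain ⟨h1, hφuv⟩ := huv
      have h1' : u.1 = v.1 := h1
      have hφuv' : φ u = φ v := hφuv
      rw [key u, key v, h1'] at hφuv'
      replace hφuv := hφuv'
      have : u.2 * φ (0,1) = v.2 * φ (0,1) := add_left_cancel hφuv
      exact Prod.ext h1' (mul_right_cancel₀ hb this)
    exact ⟨AddEquiv.ofBijective f (Finite.injective_iff_bijective.mp hinj), fun x => rfl⟩

lemma hadd_self_univ {p : ℕ} [Fact p.Prime] (h5 : 5 ≤ p) (S : Finset (ZMod p))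
    (hS : p + 3 ≤ 2 * S.card) (c : ZMod p) : c ∈ hadd S S := by
  classical
  set T := S.image (fun x => c - x) with hT
  have hTcard : T.card = S.card := card_image_of_injective _ (fun a b h => by
    have : c - a = c - b := h
    linear_combination -this)
  have hunion : (S ∪ T).card ≤ p := by
    simpa [ZMod.card] using card_le_univ (S ∪ T)
  have hint : 3 ≤ (S ∩ T).card := by
    have := card_inter_add_card_union S T
    omega
  have h2 : ((S ∩ T).filter fun x => x + x = c).card ≤ 1 := by
    apply card_le_one.2
    intro a ha b hb
    simp only [mem_filter] at ha hb
    have h2p : (2 : ZMod p) ≠ 0 := by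
      have h := (ZMod.natCast_eq_zero_iff 2 p).not.2 (by
          intro h; have := Nat.le_of_dvd (by norm_num) h; omega)
      simpa using h
    have : 2 * a = 2 * b := by
      have hha := ha.2; have hhb := hb.2
      ring_nf
      ring_nf at hha hhb
      rw [hha, hhb]
    exact mul_left_cancel₀ h2p this
  have hne : ((S ∩ T).filter fun x => ¬(x + x = c)).Nonempty := by
    rw [← card_pos]
    have := card_filter_add_card_filter_not (s := S ∩ T) (p := fun x => x + x = c)
    omega
  obtain ⟨x, hx⟩ := hne
  simp only [mem_filter, mem_inter, hT, mem_image] at hx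
  obtain ⟨⟨hxS, y, hyS, hyx⟩, hxc⟩ := hx
  have hcy : c - x = y := by linear_combination hyx
  refine mem_image.2 ⟨(x, c - x), ?_, by ring⟩
  simp only [mem_filter, mem_product]
  refine ⟨⟨hxS, hcy ▸ hyS⟩, ?_⟩
  intro h
  apply hxc
  linear_combination h


/-- Lemma 3.2 (Case 2, with the extra nonnegative sum dropped). With `H` an order-`p`
subgroup of `ℤ_p²` given as the kernel of a surjective homomorphism `φ`, coset pieces
`A_i = A ∩ φ⁻¹(i)`, `|A| = 2p+1`, `|A_0| ≥ (p+3)/2` maximal, `ℓ` the number of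
nonzero `i` with `A_i ≠ ∅` and `|A_0| + |A_i| - 1 ≥ p`, and `s` the number of
nonzero `i` with `A_i ≠ ∅` and `|A_0| + |A_i| - 1 < p`:
`|A +̂ A| ≥ (ℓ+1)p + s|A_0|`. -/
theorem lemma_3_2 {p : ℕ} [Fact p.Prime] (h5 : 5 ≤ p)
    (φ : (ZMod p × ZMod p) →+ ZMod p) (hφ : Function.Surjective φ)
    (A : Finset (ZMod p × ZMod p)) (hA : A.card = 2 * p + 1)
    (hmax : ∀ i : ZMod p, (A.filter fun a => φ a = i).card ≤
        (A.filter fun a => φ a = 0).card)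
    (hA0 : p + 3 ≤ 2 * (A.filter fun a => φ a = 0).card)
    (l s : ℕ)
    (hl : l = (Finset.univ.filter fun i : ZMod p => i ≠ 0 ∧
        (A.filter fun a => φ a = i).Nonempty ∧
        p + 1 ≤ (A.filter fun a => φ a = 0).card + (A.filter fun a => φ a = i).card).card)
    (hs : s = (Finset.univ.filter fun i : ZMod p => i ≠ 0 ∧
        (A.filter fun a => φ a = i).Nonempty ∧
        (A.filter fun a => φ a = 0).card + (A.filter fun a => φ a = i).card ≤ p).card) :
    (l + 1) * p + s * (A.filter fun a => φ a = 0).card ≤ (hadd A A).card := by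
  classical
  obtain ⟨ψ, hψ⟩ := exists_equiv φ hφ
  set S : ZMod p → Finset (ZMod p) :=
    fun i => (A.filter fun a => φ a = i).image fun x => (ψ x).1 with hSdef
  have hScard : ∀ i, (S i).card = (A.filter fun a => φ a = i).card := by
    intro i
    apply card_image_of_injOn
    intro x hx y hy hxy
    simp only [mem_coe, mem_filter] at hx hy
    apply ψ.injective
    exact Prod.ext hxy (by rw [hψ, hψ, hx.2, hy.2])
  have hS0ne : (S 0).Nonempty := by rw [← card_pos, hScard]; omega
  have hA0le : (A.filter fun a => φ a = 0).card ≤ p := by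
    rw [← hScard 0]; simpa [ZMod.card] using card_le_univ (S 0)
  -- fibers over nonzero i
  have hfiber : ∀ i : ZMod p, i ≠ 0 → (A.filter fun a => φ a = i).Nonempty →
      min p ((A.filter fun a => φ a = 0).card + (A.filter fun a => φ a = i).card - 1) ≤
        ((hadd A A).filter fun x => φ x = i).card := by
    intro i hi hne
    have hSine : (S i).Nonempty := hne.image _
    have hcd := ZMod.cauchy_davenport Fact.out hS0ne hSine
    rw [hScard 0, hScard i] at hcd
    refine hcd.trans ?_
    apply card_le_card_of_injOn (fun c => ψ.symm (c, i))
    · intro c hc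
      simp only [Finset.mem_coe] at hc ⊢
      rw [mem_add] at hc
      obtain ⟨c₀, hc₀, c₁, hc₁, rfl⟩ := hc
      simp only [hSdef, mem_image, mem_filter] at hc₀ hc₁
      obtain ⟨u, ⟨huA, huφ⟩, rfl⟩ := hc₀
      obtain ⟨v, ⟨hvA, hvφ⟩, rfl⟩ := hc₁
      have hsum : ψ (u + v) = ((ψ u).1 + (ψ v).1, i) := by
        refine Prod.ext (by simp) ?_
        rw [map_add]
        show (ψ u).2 + (ψ v).2 = i
        rw [hψ, hψ, huφ, hvφ, zero_add]
      have hsymm : ψ.symm ((ψ u).1 + (ψ v).1, i) = u + v := by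
        rw [← hsum]; exact ψ.symm_apply_apply _
      rw [hsymm, mem_filter]
      constructor
      · refine mem_image.2 ⟨(u, v), ?_, rfl⟩
        rw [mem_filter, mem_product]
        refine ⟨⟨huA, hvA⟩, fun h => hi ?_⟩
        have h' : u = v := h
        rw [← hvφ, ← h', huφ]
      · rw [← hψ, hsum]
    · intro a _ b _ h
      have := ψ.symm.injective h
      exact (Prod.ext_iff.1 this).1
  -- the zero fiber
  have hfiber0 : p ≤ ((hadd A A).filter fun x => φ x = 0).card := by
    have huniv : ∀ c : ZMod p, c ∈ hadd (S 0) (S 0) :=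
      hadd_self_univ h5 _ (by rw [hScard]; exact hA0)
    have h1 : p ≤ (hadd (S 0) (S 0)).card := by
      calc p = (univ : Finset (ZMod p)).card := by simp [ZMod.card]
        _ ≤ (hadd (S 0) (S 0)).card := card_le_card fun c _ => huniv c
    refine h1.trans ?_
    apply card_le_card_of_injOn (fun c => ψ.symm (c, 0))
    · intro c hc
      simp only [Finset.mem_coe] at hc ⊢
      simp only [hadd, mem_image, mem_filter, mem_product] at hc
      obtain ⟨⟨c₀, c₁⟩, ⟨⟨hc₀, hc₁⟩, hne⟩, rfl⟩ := hc
      simp only [hSdef, mem_image, mem_filter] at hc₀ hc₁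
      obtain ⟨u, ⟨huA, huφ⟩, rfl⟩ := hc₀
      obtain ⟨v, ⟨hvA, hvφ⟩, rfl⟩ := hc₁
      have hsum : ψ (u + v) = ((ψ u).1 + (ψ v).1, 0) := by
        refine Prod.ext (by simp) ?_
        rw [map_add]
        show (ψ u).2 + (ψ v).2 = 0
        rw [hψ, hψ, huφ, hvφ, zero_add]
      have hsymm : ψ.symm ((ψ u).1 + (ψ v).1, 0) = u + v := by
        rw [← hsum]; exact ψ.symm_apply_apply _
      rw [hsymm, mem_filter]
      constructor
      · refine mem_image.2 ⟨(u, v), ?_, rfl⟩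
        rw [mem_filter, mem_product]
        exact ⟨⟨huA, hvA⟩, fun h => hne (congrArg (fun w => (ψ w).1) (h : u = v))⟩
      · rw [← hψ, hsum]
    · intro a _ b _ h
      have := ψ.symm.injective h
      exact (Prod.ext_iff.1 this).1
  -- counting
  set L := Finset.univ.filter (fun i : ZMod p => i ≠ 0 ∧
      (A.filter fun a => φ a = i).Nonempty ∧
      p + 1 ≤ (A.filter fun a => φ a = 0).card + (A.filter fun a => φ a = i).card) with hLdef
  set Sf := Finset.univ.filter (fun i : ZMod p => i ≠ 0 ∧
      (A.filter fun a => φ a = i).Nonempty ∧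
      (A.filter fun a => φ a = 0).card + (A.filter fun a => φ a = i).card ≤ p) with hSfdef
  have h0LS : (0 : ZMod p) ∉ L ∪ Sf := by simp [hLdef, hSfdef]
  have hLS : Disjoint L Sf := by
    rw [disjoint_left]
    intro i hiL hiS
    simp only [hLdef, hSfdef, mem_filter] at hiL hiS
    omega
  have hsum : ∑ i ∈ insert 0 (L ∪ Sf), ((hadd A A).filter fun x => φ x = i).card ≤
      (hadd A A).card := by
    rw [← card_biUnion]
    · exact card_le_card (biUnion_subset.2 fun i _ => filter_subset _ _)
    · intro i _ j _ hij
      exact disjoint_left.2 fun x hxi hxj =>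
        hij (by rw [← (mem_filter.1 hxi).2, (mem_filter.1 hxj).2])
  rw [sum_insert h0LS, sum_union hLS] at hsum
  have hLsum : l * p ≤ ∑ i ∈ L, ((hadd A A).filter fun x => φ x = i).card := by
    have : l * p = ∑ _i ∈ L, p := by rw [sum_const, smul_eq_mul, hl]
    rw [this]
    refine sum_le_sum fun i hi => ?_
    simp only [hLdef, mem_filter] at hi
    obtain ⟨_, hi0, hine, hige⟩ := hi
    refine le_trans ?_ (hfiber i hi0 hine)
    exact le_min le_rfl (by omega)
  have hSsum : s * (A.filter fun a => φ a = 0).card ≤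
      ∑ i ∈ Sf, ((hadd A A).filter fun x => φ x = i).card := by
    have : s * (A.filter fun a => φ a = 0).card
        = ∑ _i ∈ Sf, (A.filter fun a => φ a = 0).card := by
      rw [sum_const, smul_eq_mul, hs]
    rw [this]
    refine sum_le_sum fun i hi => ?_
    simp only [hSfdef, mem_filter] at hi
    obtain ⟨_, hi0, hine, hile⟩ := hi
    have hipos : 1 ≤ (A.filter fun a => φ a = i).card := card_pos.2 hine
    refine le_trans ?_ (hfiber i hi0 hine)
    exact le_min hA0le (by omega)
  have hexp : (l + 1) * p = l * p + p := by ring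
  linarith [hLsum, hSsum, hfiber0, hsum]
end

section
/- Let p ≥ 5 be prime, A ⊆ Z_p² with |A| = 2p+1, and H an order-p subgroup such that exactly three cosets H_0, H_β, H_γ (0, β, γ distinct, β, γ ≠ 0) meet A, with |A_0| ≥ (p+3)/2 maximal, and both |A_0|+|A_β|-1 ≥ p and |A_0|+|A_γ|-1 ≥ p. Then |A +̂ A| ≥ 4p. -/
open Finset Pointwise

section Aux

variable {G : Type*} [AddCommGroup G] [DecidableEq G]

lemma mem_hadd_s16 {A B : Finset G} {x : G} :
    x ∈ hadd A B ↔ ∃ a ∈ A, ∃ b ∈ B, a ≠ b ∧ a + b = x := by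
  constructor
  · intro hx
    simp only [hadd, mem_image, mem_filter, mem_product] at hx
    obtain ⟨⟨a, b⟩, ⟨⟨ha, hb⟩, hne⟩, hab⟩ := hx
    exact ⟨a, ha, b, hb, hne, hab⟩
  · rintro ⟨a, ha, b, hb, hne, rfl⟩
    simp only [hadd, mem_image, mem_filter, mem_product]
    exact ⟨(a, b), ⟨⟨ha, hb⟩, hne⟩, rfl⟩

lemma card_pred_le_card_hadd (T : Finset G) : T.card - 1 ≤ (hadd T T).card := by
  rcases T.eq_empty_or_nonempty with rfl | ⟨x, hx⟩
  · simp
  · have hsub : (T.erase x).image (fun a => x + a) ⊆ hadd T T := by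
      intro z hz
      rw [mem_image] at hz
      obtain ⟨a, ha, rfl⟩ := hz
      exact mem_hadd_s16.2 ⟨x, hx, a, T.erase_subset x ha,
        fun h => (Finset.ne_of_mem_erase ha) h.symm, rfl⟩
    calc T.card - 1 = (T.erase x).card := (Finset.card_erase_of_mem hx).symm
      _ = ((T.erase x).image (fun a => x + a)).card :=
          (Finset.card_image_of_injective _ (add_right_injective x)).symm
      _ ≤ (hadd T T).card := Finset.card_le_card hsub

lemma card_le_card_hadd_self {p : ℕ} [hp : Fact p.Prime] {T : Finset (ZMod p)}
    (hT : 3 ≤ T.card) : T.card ≤ (hadd T T).card := by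
  by_contra hcon
  push_neg at hcon
  have hle := card_pred_le_card_hadd T
  have hcard : (hadd T T).card = T.card - 1 := by omega
  have key : ∀ x ∈ T, (T.erase x).image (fun a => x + a) = hadd T T := by
    intro x hx
    apply Finset.eq_of_subset_of_card_le
    · intro z hz
      rw [mem_image] at hz
      obtain ⟨a, ha, rfl⟩ := hz
      exact mem_hadd_s16.2 ⟨x, hx, a, T.erase_subset x ha,
        fun h => (Finset.ne_of_mem_erase ha) h.symm, rfl⟩
    · rw [hcard, Finset.card_image_of_injective _ (add_right_injective x),
        Finset.card_erase_of_mem hx]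
  obtain ⟨x, hx, y, hy, hxy⟩ := Finset.one_lt_card.1 (by omega : 1 < T.card)
  have hsum : ∑ z ∈ (T.erase x).image (fun a => x + a), z
      = ∑ z ∈ (T.erase y).image (fun a => y + a), z := by rw [key x hx, key y hy]
  rw [Finset.sum_image (fun a _ b _ h => add_right_injective x h),
    Finset.sum_image (fun a _ b _ h => add_right_injective y h)] at hsum
  have e1 : ∀ z ∈ T, ∑ a ∈ T.erase z, (z + a)
      = ((T.card - 1 : ℕ) : ZMod p) * z + ((∑ a ∈ T, a) - z) := by
    intro z hz
    rw [Finset.sum_add_distrib, Finset.sum_const, Finset.card_erase_of_mem hz,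
      Finset.sum_erase_eq_sub hz, nsmul_eq_mul]
  rw [e1 x hx, e1 y hy] at hsum
  have h3 : (((T.card - 1 : ℕ) : ZMod p) - 1) * (x - y) = 0 := by
    linear_combination hsum
  have hxy' : x - y ≠ 0 := sub_ne_zero.2 hxy
  have h4 : ((T.card - 1 : ℕ) : ZMod p) - 1 = 0 :=
    (mul_eq_zero.1 h3).resolve_right hxy'
  have h5 : ((T.card - 2 : ℕ) : ZMod p) = 0 := by
    have : (T.card - 1 : ℕ) = (T.card - 2) + 1 := by omega
    rw [this] at h4
    push_cast at h4
    linear_combination h4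
  have h6 : p ∣ T.card - 2 := (ZMod.natCast_eq_zero_iff _ _).1 h5
  have h7 : T.card ≤ p := by
    have := Finset.card_le_univ T
    rwa [ZMod.card] at this
  have h8 : p ≤ T.card - 2 := Nat.le_of_dvd (by omega) h6
  omega

end Aux
/-- Lemma 3.6 (Case 2, `ℓ = 2`, `s = 0`). With `H` an order-`p` subgroup of `ℤ_p²`
given as the kernel of a surjective homomorphism `φ` and coset pieces
`A_i = A ∩ φ⁻¹(i)`: if `|A| = 2p+1`, exactly the three cosets indexed by `0, β, γ`
(distinct, `β, γ ≠ 0`) meet `A`, `|A_0| ≥ (p+3)/2` is maximal, and both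
`|A_0| + |A_β| - 1 ≥ p` and `|A_0| + |A_γ| - 1 ≥ p`, then `|A +̂ A| ≥ 4p`. -/
theorem lemma_3_6 {p : ℕ} [Fact p.Prime] (h5 : 5 ≤ p)
    (φ : (ZMod p × ZMod p) →+ ZMod p) (hφ : Function.Surjective φ)
    (A : Finset (ZMod p × ZMod p)) (hA : A.card = 2 * p + 1)
    (β γ : ZMod p) (hβ : β ≠ 0) (hγ : γ ≠ 0) (hβγ : β ≠ γ)
    (hmeet : ∀ i : ZMod p,
        (A.filter fun a => φ a = i).Nonempty ↔ i ∈ ({0, β, γ} : Finset (ZMod p)))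
    (hmax : ∀ i : ZMod p, (A.filter fun a => φ a = i).card ≤
        (A.filter fun a => φ a = 0).card)
    (hA0 : p + 3 ≤ 2 * (A.filter fun a => φ a = 0).card)
    (hlβ : p + 1 ≤ (A.filter fun a => φ a = 0).card + (A.filter fun a => φ a = β).card)
    (hlγ : p + 1 ≤ (A.filter fun a => φ a = 0).card + (A.filter fun a => φ a = γ).card) :
    4 * p ≤ (hadd A A).card := by
  classical
  have hp : p.Prime := Fact.out
  have hp0 : p ≠ 0 := hp.ne_zero
  haveI : NeZero p := ⟨hp0⟩
  -- a nonzero kernel element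
  have hcardG : Fintype.card (ZMod p × ZMod p) = p * p := by
    simp [ZMod.card]
  have hninj : ¬ Function.Injective φ := by
    intro hinj
    have := Fintype.card_le_of_injective φ hinj
    rw [hcardG, ZMod.card] at this
    nlinarith
  obtain ⟨x, y, hxy, hne⟩ := Function.not_injective_iff.1 hninj
  set h : ZMod p × ZMod p := x - y with hh
  have hh0 : h ≠ 0 := sub_ne_zero.2 hne
  have hφh : φ h = 0 := by rw [hh, map_sub, hxy, sub_self]
  set ι : ZMod p → ZMod p × ZMod p := fun t => (t * h.1, t * h.2) with hιdef
  have hι_add : ∀ s t, ι (s + t) = ι s + ι t := by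
    intro s t
    simp only [hιdef, Prod.mk_add_mk, Prod.mk.injEq]
    constructor <;> ring
  have hι_inj : Function.Injective ι := by
    intro s t hst
    simp only [hιdef, Prod.mk.injEq] at hst
    by_contra hne2
    have hsub : s - t ≠ 0 := sub_ne_zero.2 hne2
    apply hh0
    have h1 : h.1 = 0 := by
      have : (s - t) * h.1 = 0 := by rw [sub_mul, hst.1]; ring
      exact (mul_eq_zero.1 this).resolve_left hsub
    have h2 : h.2 = 0 := by
      have : (s - t) * h.2 = 0 := by rw [sub_mul, hst.2]; ring
      exact (mul_eq_zero.1 this).resolve_left hsub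
    exact Prod.ext h1 h2
  have hφι : ∀ t, φ (ι t) = 0 := by
    intro t
    have hival : ι t = t.val • h := by
      have hsmul : t.val • h = (t.val • h.1, t.val • h.2) := rfl
      rw [hsmul, nsmul_eq_mul, nsmul_eq_mul, ZMod.natCast_zmod_val]
    rw [hival, map_nsmul, hφh, smul_zero]
  -- kernel cardinality and surjectivity onto the kernel
  set K := Finset.univ.filter (fun g => φ g = 0) with hKdef
  have hfib : ∀ i : ZMod p, (Finset.univ.filter (fun g => φ g = i)).card = K.card := by
    intro i
    obtain ⟨e, he⟩ := hφ i
    apply (Finset.card_bij (fun g _ => e + g) ?_ ?_ ?_).symm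
    · intro g hg
      rw [hKdef, Finset.mem_filter] at hg
      rw [Finset.mem_filter]
      exact ⟨Finset.mem_univ _, by rw [map_add, hg.2, he, add_zero]⟩
    · intro a _ b _ hab
      exact add_left_cancel hab
    · intro a ha
      rw [Finset.mem_filter] at ha
      refine ⟨a - e, ?_, by ring⟩
      rw [hKdef, Finset.mem_filter]
      exact ⟨Finset.mem_univ _, by rw [map_sub, ha.2, he, sub_self]⟩
  have hKp : K.card = p := by
    have h1 : (Finset.univ : Finset (ZMod p × ZMod p)).card
        = ∑ i : ZMod p, (Finset.univ.filter (fun g => φ g = i)).card :=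
      Finset.card_eq_sum_card_fiberwise (fun x _ => Finset.mem_univ _)
    rw [Finset.card_univ, hcardG] at h1
    rw [Finset.sum_congr rfl (fun i _ => hfib i), Finset.sum_const, Finset.card_univ,
      ZMod.card, smul_eq_mul] at h1
    exact (Nat.eq_of_mul_eq_mul_left (Nat.pos_of_ne_zero hp0) h1.symm)
  have hK_eq : K = Finset.univ.image ι := by
    apply (Finset.eq_of_subset_of_card_le ?_ ?_).symm
    · intro z hz
      rw [Finset.mem_image] at hz
      obtain ⟨t, _, rfl⟩ := hz
      rw [hKdef, Finset.mem_filter]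
      exact ⟨Finset.mem_univ _, hφι t⟩
    · rw [Finset.card_image_of_injective _ hι_inj, Finset.card_univ, ZMod.card, hKp]
  have hsurj0 : ∀ g, φ g = 0 → ∃ t, ι t = g := by
    intro g hg
    have hmem : g ∈ K := by rw [hKdef, Finset.mem_filter]; exact ⟨Finset.mem_univ _, hg⟩
    rw [hK_eq, Finset.mem_image] at hmem
    obtain ⟨t, _, ht⟩ := hmem
    exact ⟨t, ht⟩
  -- parametrisation of the pieces
  have hpar : ∀ (i : ZMod p) (e : ZMod p × ZMod p), φ e = i →
      ∃ T : Finset (ZMod p), T.card = (A.filter fun a => φ a = i).card ∧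
        (A.filter fun a => φ a = i) = T.image (fun t => e + ι t) := by
    intro i e he
    have hinj : Function.Injective (fun t => e + ι t) :=
      fun s t hst => hι_inj (add_left_cancel hst)
    refine ⟨Finset.univ.filter (fun t => e + ι t ∈ A), ?_, ?_⟩
    · rw [← Finset.card_image_of_injective _ hinj]
      congr 1
      apply Finset.Subset.antisymm
      · intro z hz
        rw [Finset.mem_image] at hz
        obtain ⟨t, ht, rfl⟩ := hz
        rw [Finset.mem_filter] at ht ⊢
        exact ⟨ht.2, by rw [map_add, hφι, he, add_zero]⟩
      · intro a ha
        rw [Finset.mem_filter] at ha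
        obtain ⟨t, ht⟩ := hsurj0 (a - e) (by rw [map_sub, ha.2, he, sub_self])
        rw [Finset.mem_image]
        refine ⟨t, ?_, by rw [ht]; ring⟩
        rw [Finset.mem_filter]
        exact ⟨Finset.mem_univ _, by rw [ht]; have : e + (a - e) = a := by ring
                                     rw [this]; exact ha.1⟩
    · apply Finset.Subset.antisymm
      · intro a ha
        rw [Finset.mem_filter] at ha
        obtain ⟨t, ht⟩ := hsurj0 (a - e) (by rw [map_sub, ha.2, he, sub_self])
        rw [Finset.mem_image]
        refine ⟨t, ?_, by rw [ht]; ring⟩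
        rw [Finset.mem_filter]
        exact ⟨Finset.mem_univ _, by rw [ht]; have : e + (a - e) = a := by ring
                                     rw [this]; exact ha.1⟩
      · intro z hz
        rw [Finset.mem_image] at hz
        obtain ⟨t, ht, rfl⟩ := hz
        rw [Finset.mem_filter] at ht ⊢
        exact ⟨ht.2, by rw [map_add, hφι, he, add_zero]⟩
  -- base points
  obtain ⟨e0, he0⟩ := (hmeet 0).2 (by simp)
  obtain ⟨eβ, heβ⟩ := (hmeet β).2 (by simp)
  obtain ⟨eγ, heγ⟩ := (hmeet γ).2 (by simp)
  rw [Finset.mem_filter] at he0 heβ heγ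
  obtain ⟨T0, hT0card, hT0set⟩ := hpar 0 e0 he0.2
  obtain ⟨Tβ, hTβcard, hTβset⟩ := hpar β eβ heβ.2
  obtain ⟨Tγ, hTγcard, hTγset⟩ := hpar γ eγ heγ.2
  -- cross-coset sumsets
  have cross : ∀ (i j : ZMod p) (e f : ZMod p × ZMod p) (S T : Finset (ZMod p)),
      φ e = i → φ f = j → i ≠ j →
      (A.filter fun a => φ a = i) = S.image (fun t => e + ι t) →
      (A.filter fun a => φ a = j) = T.image (fun t => f + ι t) →
      S.Nonempty → T.Nonempty →
      min p (S.card + T.card - 1) ≤ ((hadd A A).filter fun d => φ d = i + j).card := by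
    intro i j e f S T he hf hij hS hT hSne hTne
    have hCD := ZMod.cauchy_davenport hp hSne hTne
    have himg : ((S + T).image (fun t => (e + f) + ι t)).card = (S + T).card :=
      Finset.card_image_of_injective _ (fun s t hst => hι_inj (add_left_cancel hst))
    refine le_trans hCD (le_trans (le_of_eq himg.symm) (Finset.card_le_card ?_))
    intro z hz
    rw [Finset.mem_image] at hz
    obtain ⟨u, hu, rfl⟩ := hz
    rw [Finset.mem_add] at hu
    obtain ⟨s, hs, t, ht, rfl⟩ := hu
    have hsA : e + ι s ∈ A.filter fun a => φ a = i := by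
      rw [hS]; exact Finset.mem_image_of_mem _ hs
    have htA : f + ι t ∈ A.filter fun a => φ a = j := by
      rw [hT]; exact Finset.mem_image_of_mem _ ht
    rw [Finset.mem_filter] at hsA htA
    rw [Finset.mem_filter]
    constructor
    · refine mem_hadd_s16.2 ⟨e + ι s, hsA.1, f + ι t, htA.1, ?_, ?_⟩
      · intro hEq
        exact hij (by rw [← hsA.2, ← htA.2, hEq])
      · rw [hι_add]; ring
    · rw [map_add, hφι, add_zero, map_add, he, hf]
  -- within-coset restricted sumsets
  have selfc : ∀ (i : ZMod p) (e : ZMod p × ZMod p) (T : Finset (ZMod p)),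
      φ e = i →
      (A.filter fun a => φ a = i) = T.image (fun t => e + ι t) →
      (hadd T T).card ≤ ((hadd A A).filter fun d => φ d = i + i).card := by
    intro i e T he hT
    have himg : ((hadd T T).image (fun t => (e + e) + ι t)).card = (hadd T T).card :=
      Finset.card_image_of_injective _ (fun s t hst => hι_inj (add_left_cancel hst))
    refine le_trans (le_of_eq himg.symm) (Finset.card_le_card ?_)
    intro z hz
    rw [Finset.mem_image] at hz
    obtain ⟨u, hu, rfl⟩ := hz
    obtain ⟨s, hs, t, ht, hst, rfl⟩ := mem_hadd_s16.1 hu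
    have hsA : e + ι s ∈ A.filter fun a => φ a = i := by
      rw [hT]; exact Finset.mem_image_of_mem _ hs
    have htA : e + ι t ∈ A.filter fun a => φ a = i := by
      rw [hT]; exact Finset.mem_image_of_mem _ ht
    rw [Finset.mem_filter] at hsA htA
    rw [Finset.mem_filter]
    constructor
    · refine mem_hadd_s16.2 ⟨e + ι s, hsA.1, e + ι t, htA.1, ?_, ?_⟩
      · intro hEq
        exact hst (hι_inj (add_left_cancel hEq))
      · rw [hι_add]; ring
    · rw [map_add, hφι, add_zero, map_add, he]
  -- fiberwise counting
  have count : ∀ I : Finset (ZMod p),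
      (∑ i ∈ I, ((hadd A A).filter fun d => φ d = i).card) ≤ (hadd A A).card := by
    intro I
    have h1 : ((hadd A A).filter fun d => φ d ∈ I).card
        = ∑ i ∈ I, (((hadd A A).filter fun d => φ d ∈ I).filter fun d => φ d = i).card :=
      Finset.card_eq_sum_card_fiberwise (fun d hd => (Finset.mem_filter.1 hd).2)
    have h2 : ∀ i ∈ I, (((hadd A A).filter fun d => φ d ∈ I).filter fun d => φ d = i)
        = ((hadd A A).filter fun d => φ d = i) := by
      intro i hi
      ext d
      simp only [Finset.mem_filter]
      constructor
      · rintro ⟨⟨hd, _⟩, hdi⟩; exact ⟨hd, hdi⟩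
      · rintro ⟨hd, hdi⟩; exact ⟨⟨hd, hdi ▸ hi⟩, hdi⟩
    calc (∑ i ∈ I, ((hadd A A).filter fun d => φ d = i).card)
        = ∑ i ∈ I, (((hadd A A).filter fun d => φ d ∈ I).filter fun d => φ d = i).card :=
          Finset.sum_congr rfl (fun i hi => by rw [h2 i hi])
      _ = ((hadd A A).filter fun d => φ d ∈ I).card := h1.symm
      _ ≤ (hadd A A).card := Finset.card_le_card (Finset.filter_subset _ _)
  -- cardinal abbreviations and basic bounds
  have hTle : ∀ T : Finset (ZMod p), T.card ≤ p := by
    intro T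
    have := Finset.card_le_univ T
    rwa [ZMod.card] at this
  have ha0p : (A.filter fun a => φ a = 0).card ≤ p := hT0card ▸ hTle T0
  have haβp : (A.filter fun a => φ a = β).card ≤ p := hTβcard ▸ hTle Tβ
  have haγp : (A.filter fun a => φ a = γ).card ≤ p := hTγcard ▸ hTle Tγ
  have haβ1 : 1 ≤ (A.filter fun a => φ a = β).card :=
    Finset.card_pos.2 ((hmeet β).2 (by simp))
  have haγ1 : 1 ≤ (A.filter fun a => φ a = γ).card :=
    Finset.card_pos.2 ((hmeet γ).2 (by simp))
  have htotal : (A.filter fun a => φ a = 0).card + (A.filter fun a => φ a = β).card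
      + (A.filter fun a => φ a = γ).card = 2 * p + 1 := by
    have h1 : A.card = ∑ i ∈ ({0, β, γ} : Finset (ZMod p)), (A.filter fun a => φ a = i).card :=
      Finset.card_eq_sum_card_fiberwise
        (fun a ha => (hmeet (φ a)).1 ⟨a, Finset.mem_filter.2 ⟨ha, rfl⟩⟩)
    rw [hA] at h1
    rw [Finset.sum_insert (by simp [Ne, hβ.symm, hγ.symm] : (0 : ZMod p) ∉ ({β, γ} : Finset (ZMod p))),
      Finset.sum_insert (by simpa using hβγ), Finset.sum_singleton] at h1
    omega
  -- distinctness facts in ZMod p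
  have hnat_ne : ∀ n : ℕ, 0 < n → n < p → ((n : ZMod p) ≠ 0) := by
    intro n hn0 hnp hcon
    have := (ZMod.natCast_eq_zero_iff n p).1 hcon
    have := Nat.le_of_dvd hn0 this
    omega
  have h2ne : (2 : ZMod p) ≠ 0 := by
    have := hnat_ne 2 (by norm_num) (by omega)
    simpa using this
  have h3ne : (3 : ZMod p) ≠ 0 := by
    have := hnat_ne 3 (by norm_num) (by omega)
    simpa using this
  have hββ0 : β + β ≠ 0 := by
    intro hcon
    exact hβ ((mul_eq_zero.1 (by linear_combination hcon : (2 : ZMod p) * β = 0)).resolve_left h2ne)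
  have hγγ0 : γ + γ ≠ 0 := by
    intro hcon
    exact hγ ((mul_eq_zero.1 (by linear_combination hcon : (2 : ZMod p) * γ = 0)).resolve_left h2ne)
  have hββγγ : β + β ≠ γ + γ := by
    intro hcon
    apply hβγ
    have h' : (2 : ZMod p) * (β - γ) = 0 := by linear_combination hcon
    have := (mul_eq_zero.1 h').resolve_left h2ne
    exact sub_eq_zero.1 this
  have hβ_ne_βγ : β ≠ β + γ := fun hcon => hγ (by linear_combination -hcon)
  have hγ_ne_βγ : γ ≠ β + γ := fun hcon => hβ (by linear_combination -hcon)
  have hβ_ne_ββ : β ≠ β + β := fun hcon => hβ (by linear_combination -hcon)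
  have hγ_ne_γγ : γ ≠ γ + γ := fun hcon => hγ (by linear_combination -hcon)
  have hβγ_ne_ββ : β + γ ≠ β + β := fun hcon => hβγ (by linear_combination -hcon)
  have hβγ_ne_γγ : β + γ ≠ γ + γ := fun hcon => hβγ (by linear_combination hcon)
  -- nonemptiness of the parameter sets
  have hT0ne : T0.Nonempty := Finset.card_pos.1 (by rw [hT0card]; omega)
  have hTβne : Tβ.Nonempty := Finset.card_pos.1 (by rw [hTβcard]; omega)
  have hTγne : Tγ.Nonempty := Finset.card_pos.1 (by rw [hTγcard]; omega)
  -- the three full cosets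
  have hcβ : p ≤ ((hadd A A).filter fun d => φ d = β).card := by
    have hmin := cross 0 β e0 eβ T0 Tβ he0.2 heβ.2 (Ne.symm hβ) hT0set hTβset hT0ne hTβne
    rw [zero_add, hT0card, hTβcard] at hmin
    exact le_trans (le_min (le_refl p) (by omega)) hmin
  have hcγ : p ≤ ((hadd A A).filter fun d => φ d = γ).card := by
    have hmin := cross 0 γ e0 eγ T0 Tγ he0.2 heγ.2 (Ne.symm hγ) hT0set hTγset hT0ne hTγne
    rw [zero_add, hT0card, hTγcard] at hmin
    exact le_trans (le_min (le_refl p) (by omega)) hmin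
  have hcβγ : p ≤ ((hadd A A).filter fun d => φ d = β + γ).card := by
    have hmin := cross β γ eβ eγ Tβ Tγ heβ.2 heγ.2 hβγ hTβset hTγset hTβne hTγne
    rw [hTβcard, hTγcard] at hmin
    exact le_trans (le_min (le_refl p) (by omega)) hmin
  -- the within-coset restricted sums
  have hc0 : (A.filter fun a => φ a = 0).card ≤ ((hadd A A).filter fun d => φ d = 0).card := by
    have hs := selfc 0 e0 T0 he0.2 hT0set
    rw [add_zero] at hs
    refine le_trans ?_ hs
    rw [← hT0card]
    exact card_le_card_hadd_self (by rw [hT0card]; omega)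
  have hsβ2 := selfc β eβ Tβ heβ.2 hTβset
  have hsγ2 := selfc γ eγ Tγ heγ.2 hTγset
  have hpredβ := card_pred_le_card_hadd Tβ
  have hpredγ := card_pred_le_card_hadd Tγ
  by_cases hcase : β + γ = 0
  · -- Case B : the coset of 0 coincides with that of β + γ; use 2β and 2γ
    have hβ_ne_γγ : β ≠ γ + γ := by
      intro hcon
      have h3 : (3 : ZMod p) * γ = 0 := by linear_combination hcase - hcon
      exact hγ ((mul_eq_zero.1 h3).resolve_left h3ne)
    have hγ_ne_ββ : γ ≠ β + β := by
      intro hcon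
      have h3 : (3 : ZMod p) * β = 0 := by linear_combination hcase - hcon
      exact hβ ((mul_eq_zero.1 h3).resolve_left h3ne)
    have hsum := count {β, γ, β + γ, β + β, γ + γ}
    rw [Finset.sum_insert (by
        simp only [Finset.mem_insert, Finset.mem_singleton]
        push_neg
        exact ⟨hβγ, hβ_ne_βγ, hβ_ne_ββ, hβ_ne_γγ⟩),
      Finset.sum_insert (by
        simp only [Finset.mem_insert, Finset.mem_singleton]
        push_neg
        exact ⟨hγ_ne_βγ, hγ_ne_ββ, hγ_ne_γγ⟩),
      Finset.sum_insert (by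
        simp only [Finset.mem_insert, Finset.mem_singleton]
        push_neg
        exact ⟨hβγ_ne_ββ, hβγ_ne_γγ⟩),
      Finset.sum_insert (by simpa using hββγγ),
      Finset.sum_singleton] at hsum
    by_cases h3b : 3 ≤ Tβ.card
    · by_cases h3g : 3 ≤ Tγ.card
      · have hstrongβ := le_trans (card_le_card_hadd_self h3b) hsβ2
        have hstrongγ := le_trans (card_le_card_hadd_self h3g) hsγ2
        omega
      · have hβmax := hmax β
        have hstrongβ := le_trans (card_le_card_hadd_self h3b) hsβ2
        have hweakγ := le_trans hpredγ hsγ2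
        omega
    · by_cases h3g : 3 ≤ Tγ.card
      · have hγmax := hmax γ
        have hstrongγ := le_trans (card_le_card_hadd_self h3g) hsγ2
        have hweakβ := le_trans hpredβ hsβ2
        omega
      · omega
  · -- Case A : the coset of 0 is new
    have h0_ne_βγ : (0 : ZMod p) ≠ β + γ := fun hcon => hcase hcon.symm
    by_cases h2βγ : β + β = γ
    · -- use the coset of 2γ
      have hγγ_ne_β : γ + γ ≠ β := by
        intro hcon
        have h3 : (3 : ZMod p) * β = 0 := by linear_combination 2 * h2βγ + hcon
        exact hβ ((mul_eq_zero.1 h3).resolve_left h3ne)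
      have hsum := count {β, γ, β + γ, 0, γ + γ}
      rw [Finset.sum_insert (by
          simp only [Finset.mem_insert, Finset.mem_singleton]
          push_neg
          exact ⟨hβγ, hβ_ne_βγ, hβ, fun hcon => hγγ_ne_β hcon.symm⟩),
        Finset.sum_insert (by
          simp only [Finset.mem_insert, Finset.mem_singleton]
          push_neg
          exact ⟨hγ_ne_βγ, hγ, hγ_ne_γγ⟩),
        Finset.sum_insert (by
          simp only [Finset.mem_insert, Finset.mem_singleton]
          push_neg
          exact ⟨fun hcon => h0_ne_βγ hcon.symm, hβγ_ne_γγ⟩),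
        Finset.sum_insert (by
          simp only [Finset.mem_singleton]
          exact fun hcon => hγγ0 hcon.symm),
        Finset.sum_singleton] at hsum
      by_cases h3g : 3 ≤ Tγ.card
      · have hstrongγ := le_trans (card_le_card_hadd_self h3g) hsγ2
        omega
      · have hβmax := hmax β
        omega
    · -- use the coset of 2β
      have hsum := count {β, γ, β + γ, 0, β + β}
      rw [Finset.sum_insert (by
          simp only [Finset.mem_insert, Finset.mem_singleton]
          push_neg
          exact ⟨hβγ, hβ_ne_βγ, hβ, hβ_ne_ββ⟩),
        Finset.sum_insert (by
          simp only [Finset.mem_insert, Finset.mem_singleton]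
          push_neg
          exact ⟨hγ_ne_βγ, hγ, fun hcon => h2βγ hcon.symm⟩),
        Finset.sum_insert (by
          simp only [Finset.mem_insert, Finset.mem_singleton]
          push_neg
          exact ⟨fun hcon => h0_ne_βγ hcon.symm, hβγ_ne_ββ⟩),
        Finset.sum_insert (by
          simp only [Finset.mem_singleton]
          exact fun hcon => hββ0 hcon.symm),
        Finset.sum_singleton] at hsum
      by_cases h3b : 3 ≤ Tβ.card
      · have hstrongβ := le_trans (card_le_card_hadd_self h3b) hsβ2
        omega
      · have hγmax := hmax γ
        omega
end

section
/- Let p ≥ 5 be prime, A ⊆ Z_p² with |A| = 2p+1, and H an order-p subgroup meeting A in cosets indexed by S∪{0} with |A_0| ≥ (p+3)/2 maximal. It is impossible that exactly one nonzero index β has |A_0|+|A_β|-1 ≥ p and exactly one further nonzero index γ has A_γ ≠ ∅ with |A_0|+|A_γ|-1 < p (i.e., ℓ = 1 and s = 1 cannot occur). -/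
open Finset

/-- Lemma 3.9 (Case 2, `ℓ = 1`, `s = 1` is impossible). With `H` an order-`p`
subgroup of `ℤ_p²` given as the kernel of a surjective homomorphism `φ` and coset
pieces `A_i = A ∩ φ⁻¹(i)`: if `|A| = 2p+1` and `|A_0| ≥ (p+3)/2` is maximal, then it
cannot be that exactly one nonzero index `β` has `A_β ≠ ∅` with `|A_0|+|A_β|-1 ≥ p`
and exactly one nonzero index `γ` has `A_γ ≠ ∅` with `|A_0|+|A_γ|-1 < p`. -/
theorem lemma_3_9 {p : ℕ} [Fact p.Prime] (h5 : 5 ≤ p)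
    (φ : (ZMod p × ZMod p) →+ ZMod p) (hφ : Function.Surjective φ)
    (A : Finset (ZMod p × ZMod p)) (hA : A.card = 2 * p + 1)
    (hmax : ∀ i : ZMod p, (A.filter fun a => φ a = i).card ≤
        (A.filter fun a => φ a = 0).card)
    (hA0 : p + 3 ≤ 2 * (A.filter fun a => φ a = 0).card)
    (hl : (Finset.univ.filter fun i : ZMod p => i ≠ 0 ∧
        (A.filter fun a => φ a = i).Nonempty ∧
        p + 1 ≤ (A.filter fun a => φ a = 0).card + (A.filter fun a => φ a = i).card).card
        = 1)
    (hs : (Finset.univ.filter fun i : ZMod p => i ≠ 0 ∧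
        (A.filter fun a => φ a = i).Nonempty ∧
        (A.filter fun a => φ a = 0).card + (A.filter fun a => φ a = i).card ≤ p).card
        = 1) :
    False := by
  haveI : NeZero p := ⟨by omega⟩
  obtain ⟨β, hβ⟩ := Finset.card_eq_one.mp hl
  obtain ⟨γ, hγ⟩ := Finset.card_eq_one.mp hs
  have hβprop : β ≠ 0 ∧ (A.filter fun a => φ a = β).Nonempty ∧
      p + 1 ≤ (A.filter fun a => φ a = 0).card + (A.filter fun a => φ a = β).card := by
    have : β ∈ (Finset.univ.filter fun i : ZMod p => i ≠ 0 ∧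
        (A.filter fun a => φ a = i).Nonempty ∧
        p + 1 ≤ (A.filter fun a => φ a = 0).card + (A.filter fun a => φ a = i).card) := by
      rw [hβ]; exact Finset.mem_singleton_self β
    simpa using this
  have hγprop : γ ≠ 0 ∧ (A.filter fun a => φ a = γ).Nonempty ∧
      (A.filter fun a => φ a = 0).card + (A.filter fun a => φ a = γ).card ≤ p := by
    have : γ ∈ (Finset.univ.filter fun i : ZMod p => i ≠ 0 ∧
        (A.filter fun a => φ a = i).Nonempty ∧
        (A.filter fun a => φ a = 0).card + (A.filter fun a => φ a = i).card ≤ p) := by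
      rw [hγ]; exact Finset.mem_singleton_self γ
    simpa using this
  have hβγ : β ≠ γ := by
    intro h
    have h1 := hβprop.2.2
    have h2 := hγprop.2.2
    rw [h] at h1
    omega
  have hsum : A.card = ∑ i : ZMod p, (A.filter fun a => φ a = i).card :=
    Finset.card_eq_sum_card_fiberwise (fun a _ => Finset.mem_univ (φ a))
  have hzero : ∀ i : ZMod p, i ∉ ({0, β, γ} : Finset (ZMod p)) →
      (A.filter fun a => φ a = i).card = 0 := by
    intro i hi
    simp only [Finset.mem_insert, Finset.mem_singleton] at hi
    push_neg at hi
    by_contra hne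
    have hne' : (A.filter fun a => φ a = i).Nonempty :=
      Finset.card_pos.mp (Nat.pos_of_ne_zero hne)
    rcases le_or_gt ((A.filter fun a => φ a = 0).card + (A.filter fun a => φ a = i).card) p
        with hcase | hcase
    · have : i ∈ (Finset.univ.filter fun j : ZMod p => j ≠ 0 ∧
          (A.filter fun a => φ a = j).Nonempty ∧
          (A.filter fun a => φ a = 0).card + (A.filter fun a => φ a = j).card ≤ p) := by
        simp [hi.1, hne', hcase]
      rw [hγ, Finset.mem_singleton] at this
      exact hi.2.2 this
    · have : i ∈ (Finset.univ.filter fun j : ZMod p => j ≠ 0 ∧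
          (A.filter fun a => φ a = j).Nonempty ∧
          p + 1 ≤ (A.filter fun a => φ a = 0).card + (A.filter fun a => φ a = j).card) := by
        simp only [Finset.mem_filter, Finset.mem_univ, true_and]
        exact ⟨hi.1, hne', hcase⟩
      rw [hβ, Finset.mem_singleton] at this
      exact hi.2.1 this
  have hsum3 : ∑ i : ZMod p, (A.filter fun a => φ a = i).card =
      (A.filter fun a => φ a = 0).card + (A.filter fun a => φ a = β).card +
      (A.filter fun a => φ a = γ).card := by
    rw [← Finset.sum_subset (Finset.subset_univ ({0, β, γ} : Finset (ZMod p)))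
      (fun i _ hi => hzero i hi)]
    rw [Finset.sum_insert (by simp [Ne.symm hβprop.1, Ne.symm hγprop.1]),
      Finset.sum_insert (by simp [hβγ]), Finset.sum_singleton]
    omega
  have h1 := hβprop.2.2
  have h2 := hγprop.2.2
  have h3 := hmax β
  have h4 : 1 ≤ (A.filter fun a => φ a = γ).card := Finset.card_pos.mpr hγprop.2.1
  rw [hA, hsum3] at hsum
  omega
end

section
/- Let p ≥ 5 be prime, A ⊆ Z_p² with |A| = 2p+1 and H an order-p subgroup with |A_0| ≥ (p+3)/2 maximal among the coset pieces. If every nonzero i with A_i ≠ ∅ satisfies |A_0| + |A_i| - 1 < p (i.e., ℓ = 0), then the number s of such i satisfies s ≥ 4, and consequently |A +̂ A| ≥ 3p + (s-1)(|A_0|-1) ≥ (9p+9)/2 > 4p. -/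
open Finset Pointwise

lemma aux_cast_ne {p : ℕ} (hp : p.Prime) (h11 : 11 ≤ p) :
    ∀ n ∈ ({1,2,3,4,6,7,8,12,14,15} : Finset ℕ), (n : ZMod p) ≠ 0 := by
  intro n hn h
  rw [ZMod.natCast_eq_zero_iff] at h
  fin_cases hn <;>
    · have hle := Nat.le_of_dvd (by omega) h
      interval_cases p <;> revert h hp <;> decide

lemma aux_key {p : ℕ} (hp : p.Prime) (h11 : 11 ≤ p) (i : ZMod p) (hi : i ≠ 0) :
    ∀ c d : ℕ, c ∈ ({1,2,4,8,16} : Finset ℕ) → d ∈ ({1,2,4,8,16} : Finset ℕ) →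
      c ≠ d → (c : ZMod p) * i ≠ (d : ZMod p) * i := by
  haveI : Fact p.Prime := ⟨hp⟩
  have hn := aux_cast_ne hp h11
  intro c d hc hd hcd h
  have h' := mul_right_cancel₀ hi h
  fin_cases hc <;> fin_cases hd <;>
    first
      | exact absurd rfl hcd
      | exact hn 1 (by decide) (by push_cast at h' ⊢; linear_combination h')
      | exact hn 1 (by decide) (by push_cast at h' ⊢; linear_combination -h')
      | exact hn 2 (by decide) (by push_cast at h' ⊢; linear_combination h')
      | exact hn 2 (by decide) (by push_cast at h' ⊢; linear_combination -h')
      | exact hn 3 (by decide) (by push_cast at h' ⊢; linear_combination h')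
      | exact hn 3 (by decide) (by push_cast at h' ⊢; linear_combination -h')
      | exact hn 4 (by decide) (by push_cast at h' ⊢; linear_combination h')
      | exact hn 4 (by decide) (by push_cast at h' ⊢; linear_combination -h')
      | exact hn 6 (by decide) (by push_cast at h' ⊢; linear_combination h')
      | exact hn 6 (by decide) (by push_cast at h' ⊢; linear_combination -h')
      | exact hn 7 (by decide) (by push_cast at h' ⊢; linear_combination h')
      | exact hn 7 (by decide) (by push_cast at h' ⊢; linear_combination -h')
      | exact hn 8 (by decide) (by push_cast at h' ⊢; linear_combination h')
      | exact hn 8 (by decide) (by push_cast at h' ⊢; linear_combination -h')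
      | exact hn 12 (by decide) (by push_cast at h' ⊢; linear_combination h')
      | exact hn 12 (by decide) (by push_cast at h' ⊢; linear_combination -h')
      | exact hn 14 (by decide) (by push_cast at h' ⊢; linear_combination h')
      | exact hn 14 (by decide) (by push_cast at h' ⊢; linear_combination -h')
      | exact hn 15 (by decide) (by push_cast at h' ⊢; linear_combination h')
      | exact hn 15 (by decide) (by push_cast at h' ⊢; linear_combination -h')

lemma aux_pow {p : ℕ} (hp : p.Prime) (h11 : 11 ≤ p) (i : ZMod p) (hi : i ≠ 0)
    (S : Finset (ZMod p)) (hS : S.card = 4) (hcl : ∀ j ∈ S, j + j ∈ S)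
    (hiS : i ∈ S) : False := by
  have key := aux_key hp h11 i hi
  have e1 : ((1:ℕ) : ZMod p) * i ∈ S := by push_cast; simpa using hiS
  have e2 : ((2:ℕ) : ZMod p) * i ∈ S := by
    have := hcl _ e1; push_cast at this ⊢; convert this using 1; ring
  have e4 : ((4:ℕ) : ZMod p) * i ∈ S := by
    have := hcl _ e2; push_cast at this ⊢; convert this using 1; ring
  have e8 : ((8:ℕ) : ZMod p) * i ∈ S := by
    have := hcl _ e4; push_cast at this ⊢; convert this using 1; ring
  have e16 : ((16:ℕ) : ZMod p) * i ∈ S := by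
    have := hcl _ e8; push_cast at this ⊢; convert this using 1; ring
  have hsub : ({((1:ℕ):ZMod p) * i, ((2:ℕ):ZMod p) * i, ((4:ℕ):ZMod p) * i,
      ((8:ℕ):ZMod p) * i, ((16:ℕ):ZMod p) * i} : Finset (ZMod p)) ⊆ S := by
    intro x hx
    simp only [Finset.mem_insert, Finset.mem_singleton] at hx
    rcases hx with rfl|rfl|rfl|rfl|rfl <;> assumption
  have hcard : ({((1:ℕ):ZMod p) * i, ((2:ℕ):ZMod p) * i, ((4:ℕ):ZMod p) * i,
      ((8:ℕ):ZMod p) * i, ((16:ℕ):ZMod p) * i} : Finset (ZMod p)).card = 5 := by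
    rw [Finset.card_insert_of_notMem, Finset.card_insert_of_notMem,
        Finset.card_insert_of_notMem, Finset.card_insert_of_notMem,
        Finset.card_singleton] <;>
      simp only [Finset.mem_insert, Finset.mem_singleton] <;>
      push_neg <;>
      repeat' apply And.intro
    all_goals exact key _ _ (by decide) (by decide) (by decide)
  have := Finset.card_le_card hsub
  omega


lemma aux_pi {p : ℕ} (hp : p.Prime) (φ : (ZMod p × ZMod p) →+ ZMod p)
    (hφ : Function.Surjective φ) :
    ∃ π : (ZMod p × ZMod p) →+ ZMod p,
      (∀ v w, φ v = φ w → π v = π w → v = w) ∧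
      (∀ i t : ZMod p, ∃ v, φ v = i ∧ π v = t) := by
  haveI : Fact p.Prime := ⟨hp⟩
  haveI : NeZero p := ⟨hp.pos.ne'⟩
  have hlin : ∀ v : ZMod p × ZMod p, φ v = φ (1,0) * v.1 + φ (0,1) * v.2 := by
    intro v
    have hv : v = v.1.val • ((1:ZMod p),(0:ZMod p)) + v.2.val • ((0:ZMod p),(1:ZMod p)) := by
      ext <;> simp [nsmul_eq_mul, ZMod.natCast_val, ZMod.cast_id]
    have h1 : φ v = v.1.val • φ (1,0) + v.2.val • φ (0,1) := by
      conv_lhs => rw [hv]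
      rw [map_add, map_nsmul, map_nsmul]
    rw [h1, nsmul_eq_mul, nsmul_eq_mul, ZMod.natCast_val, ZMod.natCast_val,
      ZMod.cast_id, ZMod.cast_id]
    ring
  by_cases hc1 : φ (1,0) = 0
  · have hc2 : φ (0,1) ≠ 0 := by
      intro hc2
      obtain ⟨v, hv⟩ := hφ 1
      rw [hlin v, hc1, hc2] at hv
      simp at hv
    refine ⟨AddMonoidHom.fst (ZMod p) (ZMod p), ?_, ?_⟩
    · intro v w h1 h2
      simp only [AddMonoidHom.coe_fst] at h2
      rw [hlin v, hlin w, hc1, h2] at h1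
      have : v.2 = w.2 := by
        exact mul_left_cancel₀ hc2 (by linear_combination h1)
      exact Prod.ext h2 this
    · intro i t
      refine ⟨(t, (φ (0,1))⁻¹ * i), ?_, rfl⟩
      rw [hlin]
      simp only [hc1, zero_mul, zero_add]
      field_simp
  · refine ⟨AddMonoidHom.snd (ZMod p) (ZMod p), ?_, ?_⟩
    · intro v w h1 h2
      simp only [AddMonoidHom.coe_snd] at h2
      rw [hlin v, hlin w, h2] at h1
      have : v.1 = w.1 := by
        exact mul_left_cancel₀ hc1 (by linear_combination h1)
      exact Prod.ext this h2
    · intro i t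
      refine ⟨((φ (1,0))⁻¹ * (i - φ (0,1) * t), t), ?_, rfl⟩
      rw [hlin]
      simp only []
      field_simp
      ring

/-- Lemma 3.10 (Case 2, `ℓ = 0`). With `H` an order-`p` subgroup of `ℤ_p²` given as
the kernel of a surjective homomorphism `φ` and coset pieces `A_i = A ∩ φ⁻¹(i)`:
if `|A| = 2p+1`, `|A_0| ≥ (p+3)/2` is maximal, and every nonzero `i` with `A_i ≠ ∅`
has `|A_0| + |A_i| - 1 < p`, then the number `s` of such indices satisfies `s ≥ 4`,
and consequently `|A +̂ A| ≥ 3p + (s-1)(|A_0|-1) ≥ (9p+9)/2 > 4p`. -/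
theorem lemma_3_10 {p : ℕ} [Fact p.Prime] (h5 : 5 ≤ p)
    (φ : (ZMod p × ZMod p) →+ ZMod p) (hφ : Function.Surjective φ)
    (A : Finset (ZMod p × ZMod p)) (hA : A.card = 2 * p + 1)
    (hmax : ∀ i : ZMod p, (A.filter fun a => φ a = i).card ≤
        (A.filter fun a => φ a = 0).card)
    (hA0 : p + 3 ≤ 2 * (A.filter fun a => φ a = 0).card)
    (hl0 : ∀ i : ZMod p, i ≠ 0 → (A.filter fun a => φ a = i).Nonempty →
        (A.filter fun a => φ a = 0).card + (A.filter fun a => φ a = i).card ≤ p)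
    (s : ℕ)
    (hs : s = (Finset.univ.filter fun i : ZMod p =>
        i ≠ 0 ∧ (A.filter fun a => φ a = i).Nonempty).card) :
    4 ≤ s ∧
    3 * p + (s - 1) * ((A.filter fun a => φ a = 0).card - 1) ≤ (hadd A A).card ∧
    9 * p + 9 ≤ 2 * (hadd A A).card ∧
    4 * p < (hadd A A).card := by
  classical
  obtain ⟨hp⟩ := ‹Fact p.Prime›
  haveI : Fact p.Prime := ⟨hp⟩
  haveI : NeZero p := ⟨hp.pos.ne'⟩
  obtain ⟨π, hπinj, hπsurj⟩ := aux_pi hp φ hφ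
  set b := (A.filter fun a => φ a = 0).card with hb_def
  set S := (Finset.univ.filter fun i : ZMod p =>
      i ≠ 0 ∧ (A.filter fun a => φ a = i).Nonempty) with hS_def
  have h2p : (2 : ZMod p) ≠ 0 := by
    intro h
    rw [show (2:ZMod p) = ((2:ℕ):ZMod p) by norm_num,
      ZMod.natCast_eq_zero_iff] at h
    have := Nat.le_of_dvd (by norm_num) h
    omega
  have hmem_hadd : ∀ {x y : ZMod p × ZMod p}, x ∈ A → y ∈ A → x ≠ y →
      x + y ∈ hadd A A := by
    intro x y hx hy hxy
    exact Finset.mem_image.2 ⟨(x,y),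
      Finset.mem_filter.2 ⟨Finset.mem_product.2 ⟨hx,hy⟩, hxy⟩, rfl⟩
  have hfib : ∀ i : ZMod p, (Finset.univ.filter fun v => φ v = i).card = p := by
    intro i
    have key : (Finset.univ.filter fun v => φ v = i).card =
        (Finset.univ : Finset (ZMod p)).card := by
      apply Finset.card_bij (fun v _ => π v)
      · intros; exact Finset.mem_univ _
      · intro v hv w hw h
        exact hπinj v w (by
          rw [(Finset.mem_filter.1 hv).2, (Finset.mem_filter.1 hw).2]) h
      · intro t _
        obtain ⟨v, hv1, hv2⟩ := hπsurj i t
        exact ⟨v, Finset.mem_filter.2 ⟨Finset.mem_univ _, hv1⟩, hv2⟩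
    rw [key, Finset.card_univ, ZMod.card]
  have himg : ∀ (i : ZMod p) (B : Finset (ZMod p × ZMod p)),
      (∀ v ∈ B, φ v = i) → (B.image π).card = B.card := by
    intro i B hB
    apply Finset.card_image_of_injOn
    intro v hv w hw h
    exact hπinj v w (by rw [hB v hv, hB w hw]) h
  have hb_le : b ≤ p := by
    rw [← hfib 0]
    exact Finset.card_le_card (fun x hx => Finset.mem_filter.2
      ⟨Finset.mem_univ _, (Finset.mem_filter.1 hx).2⟩)
  have h0S : (0 : ZMod p) ∉ S := by simp [hS_def]
  have hSsum : b + ∑ i ∈ S, (A.filter fun x => φ x = i).card = 2 * p + 1 := by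
    have hA' := Finset.card_eq_sum_card_fiberwise
      (f := φ) (s := A) (t := Finset.univ) (fun x _ => Finset.mem_univ _)
    have heq : ∑ i ∈ insert (0:ZMod p) S, (A.filter fun x => φ x = i).card
        = ∑ i ∈ Finset.univ, (A.filter fun x => φ x = i).card := by
      apply Finset.sum_subset (Finset.subset_univ _)
      intro i _ hi
      rw [Finset.mem_insert] at hi
      push_neg at hi
      have hemp : ¬ (A.filter fun x => φ x = i).Nonempty := by
        intro hne
        exact hi.2 (Finset.mem_filter.2 ⟨Finset.mem_univ _, hi.1, hne⟩)
      rw [Finset.not_nonempty_iff_eq_empty.1 hemp, Finset.card_empty]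
    rw [Finset.sum_insert h0S] at heq
    rw [← hb_def] at heq
    omega
  have hm_le : ∀ i ∈ S, (A.filter fun x => φ x = i).card ≤ p - b := by
    intro i hiS
    obtain ⟨hi0, hiNe⟩ := (Finset.mem_filter.1 hiS).2
    have := hl0 i hi0 hiNe
    omega
  have hs4 : 4 ≤ s := by
    by_contra hcon
    push_neg at hcon
    have h1 : ∑ i ∈ S, (A.filter fun x => φ x = i).card ≤ S.card * (p - b) := by
      simpa using Finset.sum_le_card_nsmul S _ (p - b) hm_le
    rw [← hs] at h1
    have h2 : s * (p - b) ≤ 3 * (p - b) := Nat.mul_le_mul_right _ (by omega)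
    omega
  have hfull : p ≤ ((hadd A A).filter fun z => φ z = 0).card := by
    have hsub : (Finset.univ : Finset (ZMod p)) ⊆
        ((hadd A A).filter fun z => φ z = 0).image π := by
      intro t _
      set B := (A.filter fun x => φ x = 0).image π with hB
      have hBcard : B.card = b :=
        himg 0 _ (fun v hv => (Finset.mem_filter.1 hv).2)
      set C := B.image (fun u => t - u) with hC
      have hCcard : C.card = b := by
        rw [hC, Finset.card_image_of_injective _ sub_right_injective, hBcard]
      have hBC : 2 ≤ (B ∩ C).card := by
        have h1 := Finset.card_inter_add_card_union B C
        have h2 : (B ∪ C).card ≤ p := by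
          have := Finset.card_le_univ (B ∪ C)
          simpa [ZMod.card] using this
        omega
      obtain ⟨u₁, hu₁, u₂, hu₂, hne⟩ := Finset.one_lt_card.1 hBC
      have hprop : ∀ u ∈ B ∩ C, u ∈ B ∧ t - u ∈ B := by
        intro u hu
        obtain ⟨h1, h2⟩ := Finset.mem_inter.1 hu
        obtain ⟨w, hw, hwu⟩ := Finset.mem_image.1 h2
        refine ⟨h1, ?_⟩
        rw [← hwu, sub_sub_cancel]
        exact hw
      have hmain : ∃ u, u ∈ B ∧ t - u ∈ B ∧ u ≠ t - u := by
        by_cases hu : u₁ + u₁ = t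
        · refine ⟨u₂, (hprop u₂ hu₂).1, (hprop u₂ hu₂).2, ?_⟩
          intro h
          apply hne
          have h2 : u₂ + u₂ = t := eq_sub_iff_add_eq.mp h
          have : (2:ZMod p) * u₁ = (2:ZMod p) * u₂ := by
            rw [two_mul, two_mul, hu, h2]
          exact mul_left_cancel₀ h2p this
        · exact ⟨u₁, (hprop u₁ hu₁).1, (hprop u₁ hu₁).2,
            fun h => hu (eq_sub_iff_add_eq.mp h)⟩
      obtain ⟨u, huB, huB', hneq⟩ := hmain
      obtain ⟨x, hx, hxu⟩ := Finset.mem_image.1 huB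
      obtain ⟨y, hy, hyu⟩ := Finset.mem_image.1 huB'
      have hxy : x ≠ y := by
        intro h
        apply hneq
        rw [← hyu, ← hxu, h]
      obtain ⟨hxA, hxφ⟩ := Finset.mem_filter.1 hx
      obtain ⟨hyA, hyφ⟩ := Finset.mem_filter.1 hy
      refine Finset.mem_image.2 ⟨x + y, Finset.mem_filter.2
        ⟨hmem_hadd hxA hyA hxy, by rw [map_add, hxφ, hyφ, add_zero]⟩, ?_⟩
      rw [map_add, hxu, hyu]
      ring
    calc p = (Finset.univ : Finset (ZMod p)).card := by simp [ZMod.card]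
      _ ≤ (((hadd A A).filter fun z => φ z = 0).image π).card :=
          Finset.card_le_card hsub
      _ ≤ ((hadd A A).filter fun z => φ z = 0).card := Finset.card_image_le
  have hCD : ∀ i ∈ S, b - 1 + (A.filter fun x => φ x = i).card ≤
      ((hadd A A).filter fun z => φ z = i).card := by
    intro i hiS
    obtain ⟨hi0, hiNe⟩ := (Finset.mem_filter.1 hiS).2
    set B0 := (A.filter fun x => φ x = 0).image π with hB0_def
    set Bi := (A.filter fun x => φ x = i).image π with hBi_def
    have hB0 : B0.card = b := himg 0 _ (fun v hv => (Finset.mem_filter.1 hv).2)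
    have hBi : Bi.card = (A.filter fun x => φ x = i).card :=
      himg i _ (fun v hv => (Finset.mem_filter.1 hv).2)
    have hB0ne : B0.Nonempty := by
      rw [← Finset.card_pos, hB0]; omega
    have hBine : Bi.Nonempty := hiNe.image π
    have hcd := ZMod.cauchy_davenport hp hB0ne hBine
    have hsum_sub : B0 + Bi ⊆ ((hadd A A).filter fun z => φ z = i).image π := by
      intro u hu
      obtain ⟨u1, hu1, u2, hu2, rfl⟩ := Finset.mem_add.1 hu
      obtain ⟨x, hx, rfl⟩ := Finset.mem_image.1 hu1
      obtain ⟨y, hy, rfl⟩ := Finset.mem_image.1 hu2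
      obtain ⟨hxA, hxφ⟩ := Finset.mem_filter.1 hx
      obtain ⟨hyA, hyφ⟩ := Finset.mem_filter.1 hy
      have hxy : x ≠ y := by
        intro h
        rw [h, hyφ] at hxφ
        exact hi0 hxφ
      exact Finset.mem_image.2 ⟨x + y, Finset.mem_filter.2
        ⟨hmem_hadd hxA hyA hxy, by rw [map_add, hxφ, hyφ, zero_add]⟩,
        map_add π x y⟩
    have himgcard : (((hadd A A).filter fun z => φ z = i).image π).card =
        ((hadd A A).filter fun z => φ z = i).card :=
      himg i _ (fun v hv => (Finset.mem_filter.1 hv).2)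
    have hle1 := Finset.card_le_card hsum_sub
    have hle2 := hl0 i hi0 hiNe
    rw [min_eq_right (show B0.card + Bi.card - 1 ≤ p by omega)] at hcd
    omega
  have hglob : ∀ T : Finset (ZMod p),
      (∑ i ∈ T, ((hadd A A).filter fun z => φ z = i).card) ≤ (hadd A A).card := by
    intro T
    rw [Finset.card_eq_sum_card_fiberwise
      (f := φ) (s := hadd A A) (t := Finset.univ) (fun x _ => Finset.mem_univ _)]
    exact Finset.sum_le_sum_of_subset (Finset.subset_univ T)
  have hsum_split : ∑ i ∈ S, (b - 1 + (A.filter fun x => φ x = i).card) =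
      s * (b - 1) + ∑ i ∈ S, (A.filter fun x => φ x = i).card := by
    rw [Finset.sum_add_distrib, Finset.sum_const, smul_eq_mul, hs]
  have hbase : p + (s * (b - 1) + ∑ i ∈ S, (A.filter fun x => φ x = i).card) ≤
      (hadd A A).card := by
    have h1 := hglob (insert 0 S)
    rw [Finset.sum_insert h0S] at h1
    refine le_trans ?_ h1
    exact Nat.add_le_add hfull (hsum_split ▸ Finset.sum_le_sum hCD)
  have hsa : s * (b - 1) = (s - 1) * (b - 1) + (b - 1) := by
    conv_lhs => rw [← Nat.sub_add_cancel (show 1 ≤ s by omega)]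
    ring
  have goal2 : 3 * p + (s - 1) * (b - 1) ≤ (hadd A A).card := by omega
  have goal3 : 9 * p + 9 ≤ 2 * (hadd A A).card := by
    by_cases hcase : s = 4 ∧ 2 * b ≤ p + 4
    · obtain ⟨hs4', h2a4⟩ := hcase
      have hScard : S.card = 4 := by omega
      have hsum_le : ∑ i ∈ S, (A.filter fun x => φ x = i).card ≤ 4 * (p - b) := by
        have h1 : ∑ i ∈ S, (A.filter fun x => φ x = i).card ≤ S.card • (p - b) :=
          Finset.sum_le_card_nsmul S _ (p - b) hm_le
        rw [hScard] at h1
        simpa using h1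
      have hp11 : 11 ≤ p := by omega
      have hm4 : ∀ i ∈ S, 4 ≤ (A.filter fun x => φ x = i).card := by
        intro i hiS
        have h1 : ∑ j ∈ S.erase i, (A.filter fun x => φ x = j).card ≤
            (S.erase i).card • (p - b) :=
          Finset.sum_le_card_nsmul _ _ (p - b)
            (fun j hj => hm_le j (Finset.mem_of_mem_erase hj))
        rw [Finset.card_erase_of_mem hiS, hScard] at h1
        simp only [smul_eq_mul] at h1
        have h2 : (A.filter fun x => φ x = i).card +
            ∑ j ∈ S.erase i, (A.filter fun x => φ x = j).card =
            ∑ j ∈ S, (A.filter fun x => φ x = j).card :=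
          Finset.add_sum_erase S (fun j => (A.filter fun x => φ x = j).card) hiS
        omega
      have hex : ∃ i₀ ∈ S, i₀ + i₀ ∉ S := by
        by_contra hcl
        push_neg at hcl
        obtain ⟨i₁, hi₁⟩ := Finset.card_pos.1 (show 0 < S.card by omega)
        exact aux_pow hp hp11 i₁ (Finset.mem_filter.1 hi₁).2.1 S hScard hcl hi₁
      obtain ⟨i₀, hi₀S, hni⟩ := hex
      have hi₀0 : i₀ ≠ 0 := (Finset.mem_filter.1 hi₀S).2.1
      have h2i0 : i₀ + i₀ ≠ 0 := by
        intro h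
        apply hi₀0
        have : (2:ZMod p) * i₀ = 0 := by rw [two_mul]; exact h
        rcases mul_eq_zero.1 this with h' | h'
        · exact absurd h' h2p
        · exact h'
      have hnotin : i₀ + i₀ ∉ insert (0:ZMod p) S := by
        simp only [Finset.mem_insert]
        push_neg
        exact ⟨h2i0, hni⟩
      obtain ⟨x₀, hx₀⟩ := (Finset.mem_filter.1 hi₀S).2.2
      obtain ⟨hx₀A, hx₀φ⟩ := Finset.mem_filter.1 hx₀
      have hextra : 3 ≤ ((hadd A A).filter fun z => φ z = i₀ + i₀).card := by
        have hsub : ((A.filter fun x => φ x = i₀).erase x₀).image (fun y => x₀ + y) ⊆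
            (hadd A A).filter fun z => φ z = i₀ + i₀ := by
          intro z hz
          obtain ⟨y, hy, rfl⟩ := Finset.mem_image.1 hz
          have hyne := Finset.ne_of_mem_erase hy
          obtain ⟨hyA, hyφ⟩ := Finset.mem_filter.1 (Finset.mem_of_mem_erase hy)
          exact Finset.mem_filter.2 ⟨hmem_hadd hx₀A hyA (fun h => hyne h.symm),
            by rw [map_add, hx₀φ, hyφ]⟩
        have hc : (((A.filter fun x => φ x = i₀).erase x₀).image
            (fun y => x₀ + y)).card = (A.filter fun x => φ x = i₀).card - 1 := by
          rw [Finset.card_image_of_injective _ (add_right_injective x₀),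
            Finset.card_erase_of_mem hx₀]
        have h1 := Finset.card_le_card hsub
        have h2 := hm4 i₀ hi₀S
        omega
      have h1 := hglob (insert (i₀ + i₀) (insert 0 S))
      rw [Finset.sum_insert hnotin, Finset.sum_insert h0S] at h1
      have h3 : s * (b - 1) + ∑ i ∈ S, (A.filter fun x => φ x = i).card ≤
          ∑ i ∈ S, ((hadd A A).filter fun z => φ z = i).card :=
        hsum_split ▸ Finset.sum_le_sum hCD
      have hs4'' : s * (b - 1) = 4 * (b - 1) := by rw [hs4']
      omega
    · rcases Classical.em (s = 4) with h4 | h4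
      · have h2a5 : p + 5 ≤ 2 * b := by
          by_contra hcon
          exact hcase ⟨h4, by omega⟩
        have h3 : 3 * (b - 1) ≤ (s - 1) * (b - 1) :=
          Nat.mul_le_mul_right _ (by omega)
        omega
      · have hs5 : 5 ≤ s := by omega
        have h3 : 4 * (b - 1) ≤ (s - 1) * (b - 1) :=
          Nat.mul_le_mul_right _ (by omega)
        omega
  exact ⟨hs4, goal2, goal3, by omega⟩
end
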